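/- arXiv:1202.6648 — 7 statements merged into one kernel-verified Lean document; each statement's English description precedes it below -/
import Mathlib

section
/- Let λ be an n-core and w the minimal-length coset representative in the affine symmetric group with λ = w∅. Write γ = α_{1,n−1} + α_{2,n−1} + ⋯ + α_{n−1,n−1} (so γ = η − n·e_n on V). Then ⟨w^{-1}(ρ/n), γ⟩ = λ_1 + (n−1)/2. -/
open Finset

namespace Shi

/-- Number of boxes in column `j` (0-indexed) of the partition `lam` with `ℓ` positive parts:
the conjugate partition. -/
def conjP (lam : ℕ → ℕ) (ℓ j : ℕ) : ℕ := ((Finset.range ℓ).filter (fun i => j < lam i)).card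

/-- Hook length of the (0-indexed) box `(i, j)` of the partition `lam` having `ℓ` positive
parts. -/
def hookP (lam : ℕ → ℕ) (ℓ i j : ℕ) : ℤ :=
  (lam i : ℤ) - j + conjP lam ℓ j - i - 1

/-- `lam : ℕ → ℕ` (0-indexed, weakly decreasing, exactly `ℓ` positive parts) is an `n`-core:
no hook length is divisible by `n`. -/
def IsCore (n : ℕ) (lam : ℕ → ℕ) (ℓ : ℕ) : Prop :=
  Antitone lam ∧ (∀ i, 0 < lam i ↔ i < ℓ) ∧
    ∀ i j, i < ℓ → j < lam i → ¬ ((n : ℤ) ∣ hookP lam ℓ i j)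

/-- The `k`-th β-number (first column hook length) of `lam`, 0-indexed. -/
def betaP (lam : ℕ → ℕ) (ℓ k : ℕ) : ℤ := (lam k : ℤ) + ℓ - k - 1

/-- `x` is a bead of the original abacus of `lam`: a negative integer or a β-number. -/
def IsBead (lam : ℕ → ℕ) (ℓ : ℕ) (x : ℤ) : Prop := x < 0 ∨ ∃ k < ℓ, betaP lam ℓ k = x

/-- The vector `ρ = ((n-1)/2, (n-1)/2 - 1, …, (1-n)/2)`, half the sum of positive roots. -/
noncomputable def rhoV (n : ℕ) : Fin n → ℝ := fun i => ((n : ℝ) - 1) / 2 - ((i : ℕ) : ℝ)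

/-- `w⁻¹(v)` for the affine transformation `w = t_a ∘ u` (translation by `a` after the
permutation `u`), i.e. `w⁻¹(v) = u⁻¹ · (v - a)`. -/
noncomputable def winv (n : ℕ) (u : Equiv.Perm (Fin n)) (a : Fin n → ℤ) (v : Fin n → ℝ) : Fin n → ℝ :=
  fun i => v (u i) - (a (u i) : ℝ)

/-- `u` is the minimal length permutation sorting `-a` into antidominant position, i.e.
`a ∘ u` is weakly increasing and ties are broken stably; this is the finite part of the
minimal length coset representative `w = t_a u`. -/
def SortsMin {n : ℕ} (u : Equiv.Perm (Fin n)) (a : Fin n → ℤ) : Prop :=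
  ∀ i j : Fin n, i < j → a (u i) < a (u j) ∨ (a (u i) = a (u j) ∧ u i < u j)

/-- `a` is the vector of level numbers of the balanced abacus of `lam`: for some shift `c`
of the original abacus, the beads on runner `i` occupy exactly the levels `< a i`, and the
balance number is `0`. -/
def BalancedLevels (n : ℕ) (lam : ℕ → ℕ) (ℓ : ℕ) (a : Fin n → ℤ) : Prop :=
  (∑ i, a i) = 0 ∧ ∃ c : ℤ, ∀ i : Fin n, ∀ q : ℤ,
    IsBead lam ℓ (q * n + ((i : ℕ) : ℤ) - c) ↔ q < a i

/- ### Auxiliary lemmas -/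

lemma betaP_nonneg (lam : ℕ → ℕ) (ℓ k : ℕ) (hk : k < ℓ) : 0 ≤ betaP lam ℓ k := by
  unfold betaP; omega

lemma betaP_le (lam : ℕ → ℕ) (ℓ k : ℕ) (hmono : Antitone lam) :
    betaP lam ℓ k ≤ (lam 0 : ℤ) + ℓ - 1 := by
  have := hmono (Nat.zero_le k); unfold betaP; omega

lemma betaP_injOn (lam : ℕ → ℕ) (ℓ : ℕ) (hmono : Antitone lam) :
    Set.InjOn (betaP lam ℓ) (Finset.range ℓ) := by
  intro k hk k' hk' h
  by_contra hne
  rcases Nat.lt_or_ge k k' with hlt | hge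
  · have := hmono hlt.le; unfold betaP at h; omega
  · have hlt : k' < k := by omega
    have := hmono hlt.le; unfold betaP at h; omega

lemma isBead_top (lam : ℕ → ℕ) (ℓ : ℕ) (hpos : ∀ i, 0 < lam i ↔ i < ℓ) :
    IsBead lam ℓ ((lam 0 : ℤ) + ℓ - 1) := by
  rcases Nat.eq_zero_or_pos ℓ with h | h
  · left
    have h0 : ¬ 0 < lam 0 := by rw [hpos]; omega
    omega
  · exact Or.inr ⟨0, h, by unfold betaP; omega⟩

lemma bead_le (lam : ℕ → ℕ) (ℓ : ℕ) (x : ℤ) (hmono : Antitone lam)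
    (hx : IsBead lam ℓ x) : x ≤ (lam 0 : ℤ) + ℓ - 1 := by
  rcases hx with h | ⟨k, hk, hb⟩
  · omega
  · rw [← hb]; exact betaP_le lam ℓ k hmono

lemma shift_eq (n : ℕ) (hn : 1 ≤ n) (lam : ℕ → ℕ) (ℓ : ℕ)
    (hmono : Antitone lam) (hpos : ∀ i, 0 < lam i ↔ i < ℓ)
    (a : Fin n → ℤ) (hsum : ∑ i, a i = 0) (c : ℤ)
    (hc : ∀ (i : Fin n) (q : ℤ), IsBead lam ℓ (q * n + ((i : ℕ) : ℤ) - c) ↔ q < a i) :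
    c = -(ℓ : ℤ) := by
  classical
  set s : ℕ := ∑ i, (a i).natAbs with hs
  set N : ℤ := (ℓ : ℤ) + lam 0 + c.natAbs + s + 1 with hN
  have hNpos : 0 < N := by positivity
  have habs : ∀ i : Fin n, (a i).natAbs ≤ s := fun i =>
    Finset.single_le_sum (f := fun j => (a j).natAbs) (fun j _ => Nat.zero_le _)
      (Finset.mem_univ i)
  have haN : ∀ i : Fin n, -N ≤ a i ∧ a i ≤ N := by
    intro i; have := habs i; omega
  have hn' : (1 : ℤ) ≤ n := by exact_mod_cast hn
  have hnne : (n : ℤ) ≠ 0 := by omega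
  have hNn : N ≤ N * n := le_mul_of_one_le_right hNpos.le hn'
  set lo : ℤ := -(N * n) - c with hlo
  set hi : ℤ := N * n - c with hhi
  have hlo0 : lo ≤ 0 := by omega
  have hhitop : (lam 0 : ℤ) + ℓ - 1 < hi := by omega
  have hhi0 : 0 ≤ hi := by omega
  have key : ∀ x : ℤ, (x + c) / n * n + ((((x + c) % n).toNat : ℕ) : ℤ) - c = x := by
    intro x
    have h1 := Int.emod_nonneg (x + c) hnne
    have h3 : ((((x + c) % n).toNat : ℕ) : ℤ) = (x + c) % n := Int.toNat_of_nonneg h1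
    have hdm := Int.mul_ediv_add_emod (x + c) n
    rw [h3]; linarith
  have e1 : (∑ x ∈ Finset.Ico lo hi, (if IsBead lam ℓ x then (1 : ℤ) else 0)) =
      ∑ p ∈ (Finset.Ico (-N) N ×ˢ (Finset.univ : Finset (Fin n))),
        (if IsBead lam ℓ (p.1 * n + ((p.2 : ℕ) : ℤ) - c) then (1 : ℤ) else 0) := by
    refine Finset.sum_nbij' (i := fun x => ((x + c) / n,
        (⟨((x + c) % n).toNat, by
          have h1 := Int.emod_nonneg (x + c) hnne
          have h2 := Int.emod_lt_of_pos (x + c) (by omega : (0:ℤ) < n)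
          omega⟩ : Fin n)))
      (j := fun p => p.1 * n + ((p.2 : ℕ) : ℤ) - c) ?_ ?_ ?_ ?_ ?_
    · intro x hx
      simp only [Finset.mem_Ico, Finset.mem_product, Finset.mem_univ, and_true] at hx ⊢
      have hb1 := Int.ediv_le_ediv (by omega : (0:ℤ) < n) (by omega : -(N*n) ≤ x + c)
      have hb2 := Int.ediv_le_ediv (by omega : (0:ℤ) < n) (by omega : x + c ≤ N*n - 1)
      have h3 : -(N * n) / n = -N := by
        rw [show -(N * n) = -N * n by ring, Int.mul_ediv_cancel _ hnne]
      have h4 : (N * n - 1) / n = N - 1 := by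
        rw [show N * n - 1 = (n - 1) + (N - 1) * n by ring,
          Int.add_mul_ediv_right _ _ hnne,
          Int.ediv_eq_zero_of_lt (by omega) (by omega)]
        omega
      omega
    · intro p hp
      simp only [Finset.mem_Ico, Finset.mem_product, Finset.mem_univ, and_true] at hp ⊢
      have hp2 : ((p.2 : ℕ) : ℤ) < n := by exact_mod_cast p.2.isLt
      have hp2' : (0:ℤ) ≤ ((p.2 : ℕ) : ℤ) := by positivity
      have hm1 : -N * (n:ℤ) ≤ p.1 * n :=
        mul_le_mul_of_nonneg_right hp.1 (by omega)
      have hm2 : p.1 * (n:ℤ) ≤ (N - 1) * n :=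
        mul_le_mul_of_nonneg_right (by omega : p.1 ≤ N - 1) (by omega)
      constructor <;> nlinarith
    · intro x hx
      exact key x
    · intro p hp
      simp only [Finset.mem_product, Finset.mem_Ico, Finset.mem_univ, and_true] at hp
      have hp2 : ((p.2 : ℕ) : ℤ) < n := by exact_mod_cast p.2.isLt
      have hp2' : (0:ℤ) ≤ ((p.2 : ℕ) : ℤ) := by positivity
      have harg : p.1 * (n:ℤ) + ((p.2 : ℕ) : ℤ) - c + c = ((p.2 : ℕ) : ℤ) + p.1 * n := by ring
      have h1 : (p.1 * (n:ℤ) + ((p.2 : ℕ) : ℤ) - c + c) / n = p.1 := by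
        rw [harg, Int.add_mul_ediv_right _ _ hnne,
          Int.ediv_eq_zero_of_lt hp2' hp2]; omega
      have h2 : (p.1 * (n:ℤ) + ((p.2 : ℕ) : ℤ) - c + c) % n = ((p.2 : ℕ) : ℤ) := by
        rw [harg, Int.add_mul_emod_self_right, Int.emod_eq_of_lt hp2' hp2]
      ext
      · simpa using h1
      · show ((p.1 * (n:ℤ) + ((p.2 : ℕ) : ℤ) - c + c) % ↑n).toNat = (p.2 : ℕ)
        rw [h2]
        simp
    · intro x hx
      rw [key x]
  have e1' : (∑ p ∈ (Finset.Ico (-N) N ×ˢ (Finset.univ : Finset (Fin n))),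
        (if IsBead lam ℓ (p.1 * n + ((p.2 : ℕ) : ℤ) - c) then (1 : ℤ) else 0)) = n * N := by
    have h : ∀ p ∈ (Finset.Ico (-N) N ×ˢ (Finset.univ : Finset (Fin n))),
        (if IsBead lam ℓ (p.1 * n + ((p.2 : ℕ) : ℤ) - c) then (1 : ℤ) else 0) =
        (if p.1 < a p.2 then (1 : ℤ) else 0) := by
      intro p _
      exact if_congr (hc p.2 p.1) rfl rfl
    rw [Finset.sum_congr rfl h, Finset.sum_product, Finset.sum_comm]
    have inner : ∀ i : Fin n, (∑ q ∈ Finset.Ico (-N) N, (if q < a i then (1:ℤ) else 0)) =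
        a i + N := by
      intro i
      rw [Finset.sum_boole, Finset.Ico_filter_lt, min_eq_right (haN i).2, Int.card_Ico]
      have : (0:ℤ) ≤ a i - -N := by have := (haN i).1; omega
      rw [Int.toNat_of_nonneg this]; ring
    rw [Finset.sum_congr rfl (fun i _ => inner i), Finset.sum_add_distrib, hsum,
      Finset.sum_const, Finset.card_univ, Fintype.card_fin]
    simp [mul_comm]
  have hsplit : ∀ x : ℤ, (if IsBead lam ℓ x then (1:ℤ) else 0) =
      (if x < 0 then (1:ℤ) else 0) + (if ∃ k < ℓ, betaP lam ℓ k = x then (1:ℤ) else 0) := by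
    intro x
    by_cases h1 : x < 0
    · by_cases h2 : ∃ k < ℓ, betaP lam ℓ k = x
      · obtain ⟨k, hk, hb⟩ := h2
        have := betaP_nonneg lam ℓ k hk; omega
      · simp [IsBead, h1, h2]
    · by_cases h2 : ∃ k < ℓ, betaP lam ℓ k = x
      · simp [IsBead, h1, h2]
      · simp [IsBead, h1, h2]
  have e2 : (∑ x ∈ Finset.Ico lo hi, (if IsBead lam ℓ x then (1 : ℤ) else 0)) =
      (N * n + c) + ℓ := by
    rw [Finset.sum_congr rfl (fun x _ => hsplit x), Finset.sum_add_distrib]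
    have p1 : (∑ x ∈ Finset.Ico lo hi, (if x < 0 then (1:ℤ) else 0)) = N * n + c := by
      rw [Finset.sum_boole, Finset.Ico_filter_lt, min_eq_right hhi0, Int.card_Ico]
      have : (0:ℤ) ≤ 0 - lo := by omega
      rw [Int.toNat_of_nonneg this]; omega
    have p2 : (∑ x ∈ Finset.Ico lo hi, (if ∃ k < ℓ, betaP lam ℓ k = x then (1:ℤ) else 0)) =
        (ℓ : ℤ) := by
      rw [Finset.sum_boole]
      have himg : (Finset.Ico lo hi).filter (fun x => ∃ k < ℓ, betaP lam ℓ k = x) =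
          (Finset.range ℓ).image (betaP lam ℓ) := by
        ext x
        simp only [Finset.mem_filter, Finset.mem_Ico, Finset.mem_image, Finset.mem_range]
        constructor
        · rintro ⟨_, k, hk, hb⟩; exact ⟨k, hk, hb⟩
        · rintro ⟨k, hk, hb⟩
          have h1 := betaP_nonneg lam ℓ k hk
          have h2 := betaP_le lam ℓ k hmono
          exact ⟨⟨by omega, by omega⟩, k, hk, hb⟩
      rw [himg, Finset.card_image_of_injOn (betaP_injOn lam ℓ hmono), Finset.card_range]
    rw [p1, p2]
  have := e1.trans e1'
  rw [e2] at this
  linarith [mul_comm N (n:ℤ)]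

lemma lam_eq (n : ℕ) (hn : 2 ≤ n) (lam : ℕ → ℕ) (ℓ : ℕ)
    (hmono : Antitone lam) (hpos : ∀ i, 0 < lam i ↔ i < ℓ)
    (a : Fin n → ℤ) (c : ℤ) (hcℓ : c = -(ℓ : ℤ))
    (hc : ∀ (i : Fin n) (q : ℤ), IsBead lam ℓ (q * n + ((i : ℕ) : ℤ) - c) ↔ q < a i)
    (u : Equiv.Perm (Fin n)) (hu : SortsMin u a) :
    (lam 0 : ℤ) = n * a (u ⟨n - 1, by omega⟩) + ((u ⟨n - 1, by omega⟩ : ℕ) : ℤ) - n + 1 := by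
  have hnne : (n : ℤ) ≠ 0 := by
    have : (2:ℤ) ≤ n := by exact_mod_cast hn
    omega
  have hn1 : (1:ℤ) ≤ n := by
    have : (2:ℤ) ≤ n := by exact_mod_cast hn
    omega
  set jl : Fin n := ⟨n - 1, by omega⟩ with hjl
  set j : Fin n := u jl with hj
  set X : ℤ := (lam 0 : ℤ) + ℓ - 1 with hX
  have hub : ∀ i : Fin n, (a i - 1) * n + ((i : ℕ) : ℤ) - c ≤ X :=
    fun i => bead_le lam ℓ _ hmono ((hc i (a i - 1)).2 (by omega))
  have h1 := Int.emod_nonneg (X + c) hnne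
  have h2 := Int.emod_lt_of_pos (X + c) (by omega : (0:ℤ) < n)
  set i0 : Fin n := ⟨((X + c) % n).toNat, by omega⟩ with hi0
  set q0 : ℤ := (X + c) / n with hq0
  have hXarg : q0 * n + ((i0 : ℕ) : ℤ) - c = X := by
    have h3 : (((i0 : ℕ) : ℕ) : ℤ) = (X + c) % n := Int.toNat_of_nonneg h1
    have hdm := Int.mul_ediv_add_emod (X + c) n
    rw [h3]; linarith
  have hq0lt : q0 < a i0 := by
    rw [← hc i0 q0, hXarg]
    exact isBead_top lam ℓ hpos
  have hXle : X ≤ (a i0 - 1) * n + ((i0 : ℕ) : ℤ) - c := by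
    have : q0 * (n:ℤ) ≤ (a i0 - 1) * n :=
      mul_le_mul_of_nonneg_right (by omega) (by omega)
    omega
  have hXeq : X = (a i0 - 1) * n + ((i0 : ℕ) : ℤ) - c := le_antisymm hXle (hub i0)
  have hstrict : ∀ i : Fin n, i ≠ j →
      (a i - 1) * n + ((i : ℕ) : ℤ) < (a j - 1) * n + ((j : ℕ) : ℤ) := by
    intro i hne
    have hlt : u.symm i < jl := by
      have hle : (u.symm i : ℕ) ≤ n - 1 := by omega
      have hne' : u.symm i ≠ jl := by
        intro h; apply hne; rw [hj, ← h, Equiv.apply_symm_apply]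
      rcases lt_or_eq_of_le (Fin.mk_le_of_le_val hle : u.symm i ≤ jl) with h | h
      · exact h
      · exact absurd h hne'
    have := hu (u.symm i) jl hlt
    rw [Equiv.apply_symm_apply, ← hj] at this
    have hin : ((i : ℕ) : ℤ) < n := by exact_mod_cast i.isLt
    have hjn : (0:ℤ) ≤ ((j : ℕ) : ℤ) := by positivity
    rcases this with h | ⟨h, h'⟩
    · have : (a i - 1) * (n:ℤ) ≤ (a j - 2) * n :=
        mul_le_mul_of_nonneg_right (by omega) (by omega)
      nlinarith
    · have h'' : ((i : ℕ) : ℤ) < ((j : ℕ) : ℤ) := by exact_mod_cast h'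
      nlinarith [h, h'']
  have hieq : i0 = j := by
    by_contra hne
    have h1 := hstrict i0 hne
    have h2 := hub j
    linarith [hXeq]
  rw [hieq] at hXeq
  rw [hX, hcℓ] at hXeq
  have hexp : (a j - 1) * (n:ℤ) = n * a j - n := by ring
  have hfinal : (lam 0 : ℤ) = n * a j + ((j : ℕ) : ℤ) - n + 1 := by omega
  exact hfinal

lemma rho_sum (n : ℕ) (hn : 1 ≤ n) : ∑ k : Fin n, rhoV n k = 0 := by
  unfold rhoV
  rw [Finset.sum_sub_distrib, Finset.sum_const, Finset.card_univ, Fintype.card_fin]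
  have h1 : ∑ k : Fin n, ((k : ℕ) : ℝ) = ((∑ k ∈ Finset.range n, k : ℕ) : ℝ) := by
    rw [Fin.sum_univ_eq_sum_range (fun k => ((k : ℕ) : ℝ)) n]
    push_cast
    rfl
  have h2 : (∑ k ∈ Finset.range n, k) * 2 = n * (n - 1) := Finset.sum_range_id_mul_two n
  have h3 : ((∑ k ∈ Finset.range n, k : ℕ) : ℝ) * 2 = (n : ℝ) * ((n : ℝ) - 1) := by
    have h4 := congrArg (fun m : ℕ => (m : ℝ)) h2
    simp only [Nat.cast_mul, Nat.cast_ofNat] at h4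
    rw [h4, Nat.cast_sub hn]
    simp
  rw [h1]
  rw [nsmul_eq_mul]
  linarith [h3]

/-- for `γ = α_{1,n-1} + ⋯ + α_{n-1,n-1} = η - n·e_n`,
`⟨w⁻¹(ρ/n), γ⟩ = λ_1 + (n-1)/2`. -/
theorem gamma_inner (n : ℕ) (hn : 2 ≤ n) (lam : ℕ → ℕ) (ℓ : ℕ)
    (hcore : IsCore n lam ℓ) (a : Fin n → ℤ) (hbal : BalancedLevels n lam ℓ a)
    (u : Equiv.Perm (Fin n)) (hu : SortsMin u a) :
    (∑ i : Fin n, winv n u a (fun t => rhoV n t / n) i *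
        (if (i : ℕ) = n - 1 then 1 - (n : ℝ) else 1)) =
    (lam 0 : ℝ) + ((n : ℝ) - 1) / 2 := by
  obtain ⟨hmono, hpos, -⟩ := hcore
  obtain ⟨hsum, c, hc⟩ := hbal
  have hcℓ : c = -(ℓ : ℤ) := shift_eq n (by omega) lam ℓ hmono hpos a hsum c hc
  have hlam := lam_eq n hn lam ℓ hmono hpos a c hcℓ hc u hu
  have hn0 : 0 < n := by omega
  have hnR : (n : ℝ) ≠ 0 := Nat.cast_ne_zero.mpr (by omega)
  set f : Fin n → ℝ := winv n u a (fun t => rhoV n t / n) with hf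
  set jl : Fin n := ⟨n - 1, by omega⟩ with hjl
  have hiff : ∀ i : Fin n, ((i : ℕ) = n - 1) ↔ i = jl := by
    intro i
    constructor
    · intro h; exact Fin.ext h
    · intro h; rw [h]
  have hsplit : ∀ i : Fin n,
      f i * (if (i : ℕ) = n - 1 then 1 - (n : ℝ) else 1) =
      f i + (if i = jl then -(n : ℝ) * f i else 0) := by
    intro i
    by_cases h : i = jl
    · rw [if_pos ((hiff i).2 h), if_pos h]; ring
    · rw [if_neg (fun hh => h ((hiff i).1 hh)), if_neg h]; ring
  rw [Finset.sum_congr rfl (fun i _ => hsplit i), Finset.sum_add_distrib,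
    Finset.sum_ite_eq' Finset.univ jl (fun i => -(n:ℝ) * f i), if_pos (Finset.mem_univ jl)]
  have hsum0 : ∑ i, f i = 0 := by
    have hcomp : ∑ i, f i = ∑ k, (rhoV n k / n - ((a k : ℤ) : ℝ)) :=
      Equiv.sum_comp u (fun k => rhoV n k / n - ((a k : ℤ) : ℝ))
    rw [hcomp, Finset.sum_sub_distrib, ← Finset.sum_div, rho_sum n (by omega)]
    have hA : ∑ i : Fin n, ((a i : ℤ) : ℝ) = 0 := by
      have := congrArg (fun z : ℤ => (z : ℝ)) hsum
      push_cast at this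
      exact this
    rw [hA]
    simp
  rw [hsum0, zero_add]
  have hfj : f jl = (((n:ℝ) - 1) / 2 - ((u jl : ℕ) : ℝ)) / n - ((a (u jl) : ℤ) : ℝ) := rfl
  have hlamR : ((lam 0 : ℕ) : ℝ) =
      (n : ℝ) * ((a (u jl) : ℤ) : ℝ) + ((u jl : ℕ) : ℝ) - (n : ℝ) + 1 := by
    have := congrArg (fun z : ℤ => (z : ℝ)) hlam
    push_cast at this
    exact this
  rw [hfj]
  field_simp
  ring_nf
  nlinarith [hlamR]

end Shi
end

section
/- Let λ be an n-core and w the minimal-length coset representative with λ = w∅. Write Γ = α_{1,n−1} + α_{1,n−2} + ⋯ + α_{1,1} (so Γ = n·e_1 on V). Then ⟨w^{-1}(ρ/n), Γ⟩ = ℓ(λ) + (n−1)/2. -/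
open Finset

namespace Shi

/-!
Shift the abacus so that runner `i` carries exactly the levels `< a i`: its first gap is at
position `a i * n + i - c`. All negative positions are beads and `0` is not, so `c` is the least
of the numbers `a i * n + i`, and the stable sort `u` puts a runner attaining it first:
`c = a (u 0) * n + u 0`. Counting the nonnegative beads, i.e. the β-numbers, runner by runner
gives `ℓ = ∑ a i - c = -c` by Hermite's identity `∑_{i<n} ⌊(x + i)/n⌋ = x`. As `∑ a i` and
`∑ ρ i` vanish, pairing with `Γ = n e₁ - (1, …, 1)` leaves `ρ (u 0) - n a (u 0) = (n - 1)/2 - c`.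
-/

theorem sum_range_add_ediv (n : ℕ) [NeZero n] (x : ℤ) :
    ∑ i ∈ range n, (x + i) / n = x := by
  have hn : (n : ℤ) ≠ 0 := Int.natCast_ne_zero.mpr (NeZero.ne n)
  have step (y : ℤ) : ∑ i ∈ range n, (y + 1 + i) / n = ∑ i ∈ range n, (y + i) / n + 1 := by
    have h := (sum_range_succ' (fun i : ℕ => (y + i) / n) n).symm.trans
      (sum_range_succ (fun i : ℕ => (y + i) / n) n)
    simp only [Nat.cast_add, Nat.cast_one, Nat.cast_zero, add_zero] at h
    have hlast : (y + n) / n = y / n + 1 := by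
      simpa using Int.add_mul_ediv_right y 1 hn
    rw [hlast] at h
    simp only [add_assoc, add_comm (1 : ℤ)] at h ⊢
    linarith
  induction x using Int.induction_on with
  | zero =>
    refine sum_eq_zero fun i hi => ?_
    rw [zero_add]
    exact Int.ediv_eq_zero_of_lt (by positivity) (by exact_mod_cast mem_range.mp hi)
  | succ y ih => rw [step, ih]
  | pred y ih =>
    have := step (-y - 1)
    rw [sub_add_cancel, ih] at this
    linarith

theorem card_nonneg_eq_sum_sub {n : ℕ} [NeZero n] {P : ℤ → Prop} {a : Fin n → ℤ} {c : ℤ}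
    (hP : ∀ (i : Fin n) q, P (q * n + (i : ℕ) - c) ↔ q < a i) (hneg : ∀ x < 0, P x)
    {S : Finset ℤ} (hS : ∀ x, x ∈ S ↔ 0 ≤ x ∧ P x) :
    (#S : ℤ) = ∑ i, a i - c := by
  have hn : (0 : ℤ) < n := by exact_mod_cast Nat.pos_of_neZero n
  set m : Fin n → ℤ := fun i => -((-c + (i : ℕ)) / n)
  have hm (i : Fin n) (q : ℤ) : 0 ≤ q * n + (i : ℕ) - c ↔ m i ≤ q := by
    rw [neg_le, Int.le_ediv_iff_mul_le hn]
    constructor <;> intro h <;> linarith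
  have hma (i : Fin n) : m i ≤ a i := by
    have := (hP i (m i - 1)).mp (hneg _ (not_le.mp fun h => by linarith [(hm i _).mp h]))
    omega
  have hsum_m : ∑ i, m i = c := by
    simp only [m, sum_neg_distrib, Fin.sum_univ_eq_sum_range (fun i => (-c + i) / n),
      sum_range_add_ediv, neg_neg]
  let e : (Σ _ : Fin n, ℤ) ≃ ℤ :=
    (Equiv.sigmaEquivProd _ _).trans ((Equiv.prodComm _ _).trans
      ((Int.divModEquiv n).symm.trans (Equiv.subRight c)))
  have hcard : #S = #(univ.sigma fun i => Ico (m i) (a i)) := by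
    refine (card_equiv e fun p => ?_).symm
    obtain ⟨i, q⟩ := p
    simp only [e, hS, hm, hP, mem_sigma, mem_univ, mem_Ico, true_and, Equiv.trans_apply,
      Equiv.sigmaEquivProd_apply, Equiv.prodComm_apply, Prod.swap_prod_mk,
      Int.divModEquiv_symm_apply, Equiv.subRight_apply]
  rw [hcard, card_sigma, Nat.cast_sum]
  simp only [fun i => Int.card_Ico_of_le _ _ (hma i)]
  rw [sum_sub_distrib, hsum_m]

theorem isLeast_range_mul_add {n : ℕ} [NeZero n] {P : ℤ → Prop} {a : Fin n → ℤ} {c : ℤ}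
    (hP : ∀ (i : Fin n) q, P (q * n + (i : ℕ) - c) ↔ q < a i) (hneg : ∀ x < 0, P x)
    (h0 : ¬ P 0) : IsLeast (Set.range fun i : Fin n => a i * n + (i : ℕ)) c := by
  have hlb (i : Fin n) : c ≤ a i * n + (i : ℕ) := by
    by_contra h
    exact lt_irrefl _ ((hP i (a i)).mp (hneg _ (by linarith)))
  refine ⟨?_, by rintro _ ⟨i, rfl⟩; exact hlb i⟩
  set p := Int.divModEquiv n c
  have hp : p.1 * n + (p.2 : ℕ) = c := (Int.divModEquiv n).symm_apply_apply c
  have hap : a p.2 ≤ p.1 := not_lt.mp fun h => h0 (by simpa [hp] using (hP p.2 p.1).mpr h)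
  have : a p.2 * n ≤ p.1 * n := mul_le_mul_of_nonneg_right hap (by positivity)
  exact ⟨p.2, le_antisymm (by linarith) (hlb p.2)⟩

theorem SortsMin.isLeast_apply_zero {n : ℕ} [NeZero n] {u : Equiv.Perm (Fin n)} {a : Fin n → ℤ}
    (hu : SortsMin u a) :
    IsLeast (Set.range fun i : Fin n => a i * n + (i : ℕ)) (a (u 0) * n + (u 0 : ℕ)) := by
  refine ⟨⟨u 0, rfl⟩, ?_⟩
  rintro _ ⟨i, rfl⟩
  obtain ⟨j, rfl⟩ := u.surjective i
  rcases (Fin.zero_le j).eq_or_lt with rfl | hj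
  · exact le_rfl
  rcases hu 0 j hj with hlt | ⟨heq, hlt⟩
  · have : (a (u 0) + 1) * n ≤ a (u j) * n := mul_le_mul_of_nonneg_right hlt (by positivity)
    have := (u 0).isLt
    push_cast
    linarith
  · have : ((u 0 : ℕ) : ℤ) < (u j : ℕ) := by exact_mod_cast hlt
    dsimp only
    rw [heq]
    linarith

theorem betaP_strictAnti {lam : ℕ → ℕ} (ℓ : ℕ) (hlam : Antitone lam) : StrictAnti (betaP lam ℓ) :=
  fun k k' h => by
    have := hlam h.le
    unfold betaP
    omega

theorem one_le_betaP {lam : ℕ → ℕ} {ℓ k : ℕ} (hk : k < ℓ) (hpos : 0 < lam k) :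
    1 ≤ betaP lam ℓ k := by
  unfold betaP
  omega

theorem not_isBead_zero {lam : ℕ → ℕ} {ℓ : ℕ} (hpos : ∀ k < ℓ, 0 < lam k) : ¬ IsBead lam ℓ 0 := by
  rintro (h | ⟨k, hk, hβ⟩)
  · exact lt_irrefl 0 h
  · linarith [one_le_betaP hk (hpos k hk)]

theorem mem_image_betaP_iff {lam : ℕ → ℕ} {ℓ : ℕ} (hpos : ∀ k < ℓ, 0 < lam k) (x : ℤ) :
    x ∈ (range ℓ).image (betaP lam ℓ) ↔ 0 ≤ x ∧ IsBead lam ℓ x := by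
  simp only [mem_image, mem_range, IsBead]
  constructor
  · rintro ⟨k, hk, rfl⟩
    exact ⟨by linarith [one_le_betaP hk (hpos k hk)], Or.inr ⟨k, hk, rfl⟩⟩
  · rintro ⟨hx, h | h⟩
    · exact absurd h (not_lt.mpr hx)
    · exact h

theorem card_image_betaP {lam : ℕ → ℕ} {ℓ : ℕ} (hlam : Antitone lam) :
    #((range ℓ).image (betaP lam ℓ)) = ℓ := by
  rw [card_image_of_injective _ (betaP_strictAnti ℓ hlam).injective, card_range]

theorem sum_rhoV (n : ℕ) : ∑ i, rhoV n i = 0 := by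
  have h := Finset.sum_range_id_mul_two n
  rcases n with _ | n
  · simp
  simp only [rhoV, sum_sub_distrib, sum_const, card_univ, Fintype.card_fin, nsmul_eq_mul,
    Fin.sum_univ_eq_sum_range (fun i => (i : ℝ))]
  have : ((∑ i ∈ range (n + 1), i : ℕ) : ℝ) * 2 = (n + 1 : ℕ) * n := by exact_mod_cast h
  push_cast at this ⊢
  linarith

theorem sum_winv (n : ℕ) (u : Equiv.Perm (Fin n)) (a : Fin n → ℤ) (v : Fin n → ℝ) :
    ∑ i, winv n u a v i = ∑ i, v i - ∑ i, (a i : ℝ) := by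
  rw [← sum_sub_distrib]
  exact Equiv.sum_comp u fun j => v j - a j

theorem sum_mul_ite_zero {n : ℕ} [NeZero n] (w : Fin n → ℝ) :
    ∑ i, w i * (if (i : ℕ) = 0 then (n : ℝ) - 1 else -1) = n * w 0 - ∑ i, w i := by
  have (i : Fin n) : w i * (if (i : ℕ) = 0 then (n : ℝ) - 1 else -1) =
      (if i = 0 then n * w i else 0) - w i := by
    simp only [Fin.val_eq_zero_iff]
    split_ifs <;> ring
  simp only [this, sum_sub_distrib, sum_ite_eq', mem_univ, if_true]

/-- for `Γ = α_{1,n-1} + α_{1,n-2} + ⋯ + α_{1,1} = n·e_1 - η`,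
`⟨w⁻¹(ρ/n), Γ⟩ = ℓ(λ) + (n-1)/2`. -/
theorem Gamma_inner (n : ℕ) (hn : 2 ≤ n) (lam : ℕ → ℕ) (ℓ : ℕ)
    (hcore : IsCore n lam ℓ) (a : Fin n → ℤ) (hbal : BalancedLevels n lam ℓ a)
    (u : Equiv.Perm (Fin n)) (hu : SortsMin u a) :
    (∑ i : Fin n, winv n u a (fun t => rhoV n t / n) i *
        (if (i : ℕ) = 0 then (n : ℝ) - 1 else -1)) =
    (ℓ : ℝ) + ((n : ℝ) - 1) / 2 := by
  have : NeZero n := ⟨by omega⟩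
  obtain ⟨hlam, hpos, -⟩ := hcore
  obtain ⟨hsum, c, hc⟩ := hbal
  replace hpos : ∀ k < ℓ, 0 < lam k := fun k => (hpos k).mpr
  have hneg : ∀ x < 0, IsBead lam ℓ x := fun _ => Or.inl
  have hℓ : (ℓ : ℤ) = -c := by
    have := card_nonneg_eq_sum_sub hc hneg (mem_image_betaP_iff hpos)
    rw [card_image_betaP hlam, hsum] at this
    linarith
  have hc0 : c = a (u 0) * n + (u 0 : ℕ) :=
    (isLeast_range_mul_add hc hneg (not_isBead_zero hpos)).unique hu.isLeast_apply_zero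
  have hsumR : ∑ i, (a i : ℝ) = 0 := by exact_mod_cast hsum
  have hℓR : (ℓ : ℝ) = -(a (u 0) * n + (u 0 : ℕ)) := by exact_mod_cast hc0 ▸ hℓ
  have hn0 : (n : ℝ) ≠ 0 := NeZero.ne _
  rw [sum_mul_ite_zero, sum_winv, ← sum_div, sum_rhoV, hsumR, hℓR]
  simp only [winv, rhoV]
  field_simp
  ring

end Shi
end

section
/- Let λ be a nonempty n-core and w the minimal-length coset representative with λ = w∅, and θ the highest root of A_{n−1}. Then n·⟨w^{-1}(ρ/n), θ⟩ = λ_1 + ℓ(λ) + n − 1 = h_{11}^λ + n. -/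
open Finset

namespace Shi

/-!
Put the first gap of runner `i` of the balanced abacus at position `a i * n + i` (up to the
shift `c`). The stable sort `u` orders the runners by this position, so `u 0` carries the lowest
first gap and `u (n - 1)` the highest. The lowest gap of the whole abacus is the first gap `0` of
the abacus of `λ`, and its highest bead, one level below the highest first gap, is the largest
β-number `λ₁ + ℓ - 1`. So the spread of the first gaps, which is `n⟨w⁻¹(ρ/n), θ⟩`, equals
`λ₁ + ℓ - 1 + n`.
-/

def gapPos {n : ℕ} (a : Fin n → ℤ) (i : Fin n) : ℤ := a i * n + i

section Runners

variable {n : ℕ} {a : Fin n → ℤ}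

lemma exists_eq_runner_level (hn : 0 < n) (c y : ℤ) :
    ∃ (i : Fin n) (q : ℤ), y = q * n + i - c := by
  have hr : 0 ≤ (y + c) % n := Int.emod_nonneg _ (by omega)
  have hr' : (y + c) % n < n := Int.emod_lt_of_pos _ (by omega)
  refine ⟨⟨((y + c) % n).toNat, by omega⟩, (y + c) / n, ?_⟩
  have := Int.mul_ediv_add_emod (y + c) n
  simp only [Int.toNat_of_nonneg hr]
  linarith

lemma gapPos_lt_of_lex {i j : Fin n} (h : a i < a j ∨ (a i = a j ∧ i < j)) :
    gapPos a i < gapPos a j := by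
  unfold gapPos
  have hi : (i : ℤ) < n := by exact_mod_cast i.isLt
  have hj : (0 : ℤ) ≤ j := by positivity
  rcases h with h | ⟨h, hij⟩
  · nlinarith
  · have : (i : ℤ) < j := by exact_mod_cast hij
    rw [h]
    linarith

lemma SortsMin.strictMono_gapPos {u : Equiv.Perm (Fin n)} (hu : SortsMin u a) :
    StrictMono (gapPos a ∘ u) :=
  fun _ _ hij => gapPos_lt_of_lex (hu _ _ hij)

lemma SortsMin.gapPos_first_le {u : Equiv.Perm (Fin n)} (hu : SortsMin u a) (h₀ : 0 < n)
    (i : Fin n) : gapPos a (u ⟨0, h₀⟩) ≤ gapPos a i := by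
  simpa using hu.strictMono_gapPos.monotone
    (show ⟨0, h₀⟩ ≤ u.symm i from Fin.le_def.2 (Nat.zero_le _))

lemma SortsMin.le_gapPos_last {u : Equiv.Perm (Fin n)} (hu : SortsMin u a) (h₁ : n - 1 < n)
    (i : Fin n) : gapPos a i ≤ gapPos a (u ⟨n - 1, h₁⟩) := by
  simpa using hu.strictMono_gapPos.monotone
    (show u.symm i ≤ ⟨n - 1, h₁⟩ from Fin.le_def.2 (Nat.le_sub_one_of_lt (u.symm i).isLt))

variable {P : ℤ → Prop} {c : ℤ}
  (hP : ∀ (i : Fin n) (q : ℤ), P (q * n + i - c) ↔ q < a i)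
include hP

lemma isLeast_not_of_runners (hn : 0 < n) {i₀ : Fin n}
    (hi₀ : ∀ i, gapPos a i₀ ≤ gapPos a i) :
    IsLeast {y | ¬ P y} (gapPos a i₀ - c) := by
  refine ⟨(hP i₀ (a i₀)).not.2 (lt_irrefl _), fun y hy => ?_⟩
  obtain ⟨i, q, rfl⟩ := exists_eq_runner_level hn c y
  have hq : a i ≤ q := not_lt.1 ((hP i q).not.1 hy)
  have := hi₀ i
  unfold gapPos at this ⊢
  nlinarith

lemma isGreatest_of_runners (hn : 0 < n) {i₁ : Fin n}
    (hi₁ : ∀ i, gapPos a i ≤ gapPos a i₁) :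
    IsGreatest {y | P y} (gapPos a i₁ - n - c) := by
  refine ⟨?_, fun y hy => ?_⟩
  · have hlevel : gapPos a i₁ - n - c = (a i₁ - 1) * n + i₁ - c := by
      unfold gapPos
      ring
    rw [Set.mem_ofPred_eq, hlevel, hP]
    omega
  · obtain ⟨i, q, rfl⟩ := exists_eq_runner_level hn c y
    have hq : q + 1 ≤ a i := (hP i q).1 hy
    have := hi₁ i
    unfold gapPos at this ⊢
    nlinarith

end Runners

section Partition

variable {lam : ℕ → ℕ} {ℓ : ℕ}

lemma isLeast_not_isBead (hpos : ∀ i, 0 < lam i ↔ i < ℓ) :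
    IsLeast {y | ¬ IsBead lam ℓ y} 0 := by
  refine ⟨?_, fun y hy => not_lt.1 fun h => hy (Or.inl h)⟩
  rintro (h | ⟨k, hk, hbeta⟩)
  · exact lt_irrefl _ h
  · have := (hpos k).2 hk
    unfold betaP at hbeta
    omega

lemma isGreatest_isBead (hanti : Antitone lam) (hne : 0 < ℓ) :
    IsGreatest {y | IsBead lam ℓ y} (betaP lam ℓ 0) := by
  refine ⟨Or.inr ⟨0, hne, rfl⟩, ?_⟩
  rintro y (h | ⟨k, -, rfl⟩)
  · unfold betaP
    omega
  · have := hanti (Nat.zero_le k)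
    unfold betaP
    omega

end Partition

lemma mul_sub_winv_rho {n : ℕ} (hn : n ≠ 0) (u : Equiv.Perm (Fin n)) (a : Fin n → ℤ)
    (j j' : Fin n) :
    (n : ℝ) * (winv n u a (fun t => rhoV n t / n) j - winv n u a (fun t => rhoV n t / n) j') =
      (gapPos a (u j') - gapPos a (u j) : ℤ) := by
  simp only [winv, rhoV, gapPos]
  push_cast
  field_simp
  ring

/-- for a nonempty `n`-core, `n·⟨w⁻¹(ρ/n), θ⟩ = λ_1 + ℓ(λ) + n - 1
= h_{11} + n`. -/
theorem theta_inner (n : ℕ) (hn : 2 ≤ n) (lam : ℕ → ℕ) (ℓ : ℕ) (hne : 0 < ℓ)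
    (hcore : IsCore n lam ℓ) (a : Fin n → ℤ) (hbal : BalancedLevels n lam ℓ a)
    (u : Equiv.Perm (Fin n)) (hu : SortsMin u a) :
    (n : ℝ) * (winv n u a (fun t => rhoV n t / n) ⟨0, by omega⟩ -
        winv n u a (fun t => rhoV n t / n) ⟨n - 1, by omega⟩) =
      (lam 0 : ℝ) + (ℓ : ℝ) + (n : ℝ) - 1 ∧
    (lam 0 : ℝ) + (ℓ : ℝ) + (n : ℝ) - 1 = ((lam 0 : ℝ) + (ℓ : ℝ) - 1) + (n : ℝ) := by
  obtain ⟨hanti, hpos, -⟩ := hcore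
  obtain ⟨-, c, hc⟩ := hbal
  have hfirst : gapPos a (u ⟨0, by omega⟩) - c = 0 :=
    (isLeast_not_of_runners hc (by omega) (hu.gapPos_first_le _)).unique
      (isLeast_not_isBead hpos)
  have hlast : gapPos a (u ⟨n - 1, by omega⟩) - n - c = betaP lam ℓ 0 :=
    (isGreatest_of_runners hc (by omega) (hu.le_gapPos_last _)).unique
      (isGreatest_isBead hanti hne)
  have hspan :
      gapPos a (u ⟨n - 1, by omega⟩) - gapPos a (u ⟨0, by omega⟩) = lam 0 + ℓ - 1 + n := by
    unfold betaP at hlast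
    push_cast at hlast
    linarith
  refine ⟨?_, by ring⟩
  rw [mul_sub_winv_rho (by omega), hspan]
  push_cast
  ring

end Shi
end

section
/- For nonnegative integers μ_1 ≥ μ_2 ≥ ⋯ ≥ μ_n = 0 with μ_i ≤ (n−i)m for each i, there is exactly one dominant region R of the m-Shi arrangement of type A_{n−1} whose Shi tableau {e_{ij}} has column sums μ_j = Σ_{i=1}^{n−j} e_{i,n−j} for 1 ≤ j ≤ n−1. In other words, column sums give a bijection from dominant m-Shi regions to partitions μ with μ_i ≤ (n−i)m. -/
/-!
Write a point of the dominant chamber as `x = c - f` with `f₀ < f₁ < ⋯`, so that the tableau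
entry `e_{iC} = min(⌊f_{C+1} - f_i⌋, m)` counts the values `f_i + t` (`1 ≤ t ≤ m`) lying below
`f_{C+1}`. Choose the `f_C` one at a time, keeping all these values distinct. Then, as `f_{C+1}`
moves up from `f_C`, the sum of column `C` grows by exactly one at each value it passes, from the
sum `μ_{n-1-C}` of the previous column up to `(C+1)m`; the hypotheses on `μ` put `μ_{n-2-C}` in
this range, so every column sum can be hit.

For uniqueness, a Shi tableau satisfies
`min(e_{it} + e_{t+1,j}, m) ≤ e_{ij} ≤ min(e_{it} + e_{t+1,j} + 1, m)`. If two tableaux agree left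
of column `j` and have the same sum in column `j` but differ there, then `f_{uj} < e_{uj}` and
`e_{wj} < f_{wj}` for two rows `u < w` (up to swapping `e` and `f`), and splitting `α_{uj}` at `w`
makes these two inequalities incompatible.
-/

open Finset

namespace Shi

/-- Inner product of `x` with the positive root `α_{ij} = e_i - e_{j+1}` (0-indexed
`i ≤ j ≤ n-2`). -/
def inn (x : ℕ → ℝ) (i j : ℕ) : ℝ := x i - x (j + 1)

def SumZero (n : ℕ) (x : ℕ → ℝ) : Prop := ∑ i ∈ Finset.range n, x i = 0

/-- `x` is a point of the type `A_{n-1}` ambient space lying in the open dominant chamber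
and on no hyperplane of the `m`-Shi arrangement, hence an interior point of a dominant
`m`-Shi region. -/
def RegionPoint (n m : ℕ) (x : ℕ → ℝ) : Prop :=
  SumZero n x ∧
  (∀ i j, i ≤ j → j + 2 ≤ n → 0 < inn x i j) ∧
  (∀ i j, i ≤ j → j + 2 ≤ n → ∀ t : ℤ, -(m : ℤ) < t → t ≤ m → inn x i j ≠ (t : ℝ))

/-- `e` is the Shi tableau of the dominant `m`-Shi region containing `x`:
`e_{ij} = min(⌊⟨x, α_{ij}⟩⌋, m)`, which is constant on the region and equals
`min(k_{ij}, m)` for the Shi coordinates `k` of the `m`-minimal alcove of the region. -/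
def TabOf (n m : ℕ) (x : ℕ → ℝ) (e : ℕ → ℕ → ℤ) : Prop :=
  ∀ i j, i ≤ j → j + 2 ≤ n → e i j = min ⌊inn x i j⌋ (m : ℤ)

/-- `e` is the Shi tableau of some dominant region of the `m`-Shi arrangement of type
`A_{n-1}`. -/
def IsShiTab (n m : ℕ) (e : ℕ → ℕ → ℤ) : Prop :=
  ∃ x, RegionPoint n m x ∧ TabOf n m x e

/-- `p` lies in the closure of the `m`-Shi region containing `x`. -/
def InClosure (n m : ℕ) (x p : ℕ → ℝ) : Prop :=
  SumZero n p ∧ ∀ i j, i ≤ j → j + 2 ≤ n → ∀ t : ℤ, -(m : ℤ) < t → t ≤ m →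
    (((t : ℝ) < inn x i j → (t : ℝ) ≤ inn p i j) ∧ (inn x i j < t → inn p i j ≤ t))

/-- The hyperplane `H_{α_{uv}, m}` is a separating wall for the dominant `m`-Shi region
containing `x`: the region lies on the far side of the hyperplane from the fundamental
alcove, and the closure of the region contains a point of the hyperplane lying on no other
hyperplane of the arrangement (so the hyperplane supports a facet). -/
def SepWall (n m : ℕ) (x : ℕ → ℝ) (u v : ℕ) : Prop :=
  (m : ℝ) < inn x u v ∧
  ∃ p, InClosure n m x p ∧ inn p u v = (m : ℝ) ∧
    ∀ i j, i ≤ j → j + 2 ≤ n → ∀ t : ℤ, -(m : ℤ) < t → t ≤ m →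
      ¬(i = u ∧ j = v ∧ t = (m : ℤ)) → inn p i j ≠ (t : ℝ)

/-- The combinatorial criterion for `H_{α_{uv}, m}` to be a separating wall. -/
def SepCrit (m : ℕ) (e : ℕ → ℕ → ℤ) (u v : ℕ) : Prop :=
  e u v = (m : ℤ) ∧ ∀ t, u ≤ t → t < v → e u t + e (t + 1) v = (m : ℤ) - 1

/-- The region with Shi tableau `e` has `H_{α_{uv}, m}` as a separating wall. -/
def SepWallTab (n m : ℕ) (e : ℕ → ℕ → ℤ) (u v : ℕ) : Prop :=
  ∃ x, RegionPoint n m x ∧ TabOf n m x e ∧ SepWall n m x u v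

/-- A tableau function normalized to be `0` outside the staircase index domain. -/
def Normalized (n : ℕ) (e : ℕ → ℕ → ℤ) : Prop :=
  ∀ i j, ¬(i ≤ j ∧ j + 2 ≤ n) → e i j = 0

end Shi

theorem Finset.exists_gt_notMem_card_filter_lt_eq {α : Type*} [LinearOrder α] [DenselyOrdered α]
    [NoMaxOrder α] (s : Finset α) (b : α) {r : ℕ} (hlo : #{x ∈ s | x ≤ b} ≤ r) (hhi : r ≤ #s) :
    ∃ v, b < v ∧ v ∉ s ∧ #{x ∈ s | x < v} = r := by
  induction s using Finset.induction_on_min generalizing b r with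
  | empty =>
    obtain ⟨v, hv⟩ := exists_gt b
    exact ⟨v, hv, notMem_empty v, by simp_all⟩
  | insert a s has ih =>
    have has' : a ∉ s := fun h => (has a h).false
    rw [card_insert_of_notMem has'] at hhi
    rcases r with _ | r
    · have hba : b < a := by
        by_contra! hab
        simp [filter_insert, hab] at hlo
      obtain ⟨v, hbv, hva⟩ := _root_.exists_between hba
      refine ⟨v, hbv, ?_, ?_⟩
      · simp only [mem_insert, not_or]
        exact ⟨hva.ne, fun h => (has v h).not_gt hva⟩
      · simp only [card_eq_zero, filter_eq_empty_iff, mem_insert, not_lt]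
        rintro x (rfl | hx)
        exacts [hva.le, (hva.trans (has x hx)).le]
    · have hlo' : #{x ∈ s | x ≤ max a b} ≤ r := by
        rcases le_total a b with hab | hba
        · rw [filter_insert, if_pos hab, card_insert_of_notMem (fun h => has' (mem_filter.1 h).1)]
            at hlo
          rwa [max_eq_right hab, ← Nat.succ_le_succ_iff]
        · rw [max_eq_left hba, card_eq_zero.2 (filter_eq_empty_iff.2 fun x hx => (has x hx).not_ge)]
          exact r.zero_le
      obtain ⟨v, hv, hvs, hcard⟩ := ih (max a b) hlo' (by omega)
      refine ⟨v, (le_max_right a b).trans_lt hv, ?_, ?_⟩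
      · simp only [mem_insert, not_or]
        exact ⟨((le_max_left a b).trans_lt hv).ne', hvs⟩
      · rw [filter_insert, if_pos ((le_max_left a b).trans_lt hv),
          card_insert_of_notMem (fun h => has' (mem_filter.1 h).1), hcard]

theorem Finset.exists_lt_of_sum_eq_of_ne {ι M : Type*} [AddCommMonoid M] [LinearOrder M]
    [IsOrderedCancelAddMonoid M] {s : Finset ι} {a b : ι → M}
    (hsum : ∑ i ∈ s, a i = ∑ i ∈ s, b i) {k : ι} (hk : k ∈ s) (hne : a k ≠ b k) :
    ∃ i ∈ s, a i < b i := by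
  by_contra! hle
  exact hne ((sum_eq_sum_iff_of_le hle).1 hsum.symm k hk).symm

namespace Shi

theorem exists_sumZero_inn_eq (n : ℕ) (f : ℕ → ℝ) :
    ∃ x, SumZero n x ∧ ∀ i j, inn x i j = f (j + 1) - f i := by
  refine ⟨fun i => (∑ k ∈ range n, f k) / n - f i, ?_, fun i j => by simp only [inn]; ring⟩
  rcases n.eq_zero_or_pos with rfl | hn
  · simp [SumZero]
  · simp only [SumZero, sum_sub_distrib, sum_const, card_range, nsmul_eq_mul]
    rw [mul_div_cancel₀ _ (by positivity), sub_self]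

def ShiRecurrence (n m : ℕ) (e : ℕ → ℕ → ℤ) : Prop :=
  ∀ i t j, i ≤ t → t < j → j + 2 ≤ n →
    min (e i t + e (t + 1) j) m ≤ e i j ∧ e i j ≤ min (e i t + e (t + 1) j + 1) m

theorem shiRecurrence_of_tabOf {n m : ℕ} {x : ℕ → ℝ} {e : ℕ → ℕ → ℤ} (hx : RegionPoint n m x)
    (he : TabOf n m x e) : ShiRecurrence n m e := by
  intro i t j hit htj hj
  have hsplit : inn x i j = inn x i t + inn x (t + 1) j := by unfold inn; ring
  have h₁ := Int.floor_nonneg.2 (hx.2.1 i t hit (by omega)).le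
  have h₂ := Int.floor_nonneg.2 (hx.2.1 (t + 1) j htj hj).le
  have hlo := Int.le_floor_add (inn x i t) (inn x (t + 1) j)
  have hhi := Int.le_floor_add_floor (inn x i t) (inn x (t + 1) j)
  rw [← hsplit] at hlo hhi
  rw [he i j (by omega) hj, he i t hit (by omega), he (t + 1) j htj hj]
  omega

theorem ShiRecurrence.le_of_lt_of_eq {n m : ℕ} {e f : ℕ → ℕ → ℤ} (he : ShiRecurrence n m e)
    (hf : ShiRecurrence n m f) {u t j : ℕ} (hut : u ≤ t) (htj : t < j) (hj : j + 2 ≤ n)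
    (heq : e u t = f u t) (hlt : f u j < e u j) : f (t + 1) j ≤ e (t + 1) j := by
  have := he u t j hut htj hj
  have := hf u t j hut htj hj
  omega

theorem ShiRecurrence.eq_of_colSum_eq {n m : ℕ} {e f : ℕ → ℕ → ℤ} (he : ShiRecurrence n m e)
    (hf : ShiRecurrence n m f)
    (hcol : ∀ C, C + 2 ≤ n → ∑ i ∈ range (C + 1), e i C = ∑ i ∈ range (C + 1), f i C) :
    ∀ j i, i ≤ j → j + 2 ≤ n → e i j = f i j := by
  intro j
  induction j using Nat.strong_induction_on with
  | _ j ih =>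
  intro i hij hj
  by_contra hne
  have hi : i ∈ range (j + 1) := mem_range.2 (by omega)
  obtain ⟨k, hk, hek⟩ := exists_lt_of_sum_eq_of_ne (hcol j hj) hi hne
  obtain ⟨l, hl, hfl⟩ := exists_lt_of_sum_eq_of_ne (hcol j hj).symm hi (Ne.symm hne)
  rw [mem_range] at hk hl
  rcases lt_trichotomy k l with hkl | rfl | hlk
  · obtain ⟨t, rfl⟩ : ∃ t, l = t + 1 := ⟨l - 1, by omega⟩
    have := hf.le_of_lt_of_eq he (by omega) (by omega) hj
      (ih t (by omega) k (by omega) (by omega)).symm hek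
    omega
  · omega
  · obtain ⟨t, rfl⟩ : ∃ t, k = t + 1 := ⟨k - 1, by omega⟩
    have := he.le_of_lt_of_eq hf (by omega) (by omega) hj
      (ih t (by omega) l (by omega) (by omega)) hfl
    omega

/-- For a point `x = c - f`, `wallCount m (f i) (f (j + 1))` is the tableau entry `e_{ij}`
(see `wallCount_eq_min`). -/
noncomputable def wallCount (m : ℕ) (w v : ℝ) : ℕ := #{t ∈ Icc 1 m | w + (t : ℕ) < v}

noncomputable def wallsBelow (m : ℕ) (f : ℕ → ℝ) (k : ℕ) (v : ℝ) : ℕ :=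
  ∑ i ∈ range k, wallCount m (f i) v

def IsGeneric (m C : ℕ) (f : ℕ → ℝ) : Prop :=
  ∀ i j, i < j → j ≤ C → f i < f j ∧ ∀ t ∈ Icc 1 m, f j - f i ≠ t

theorem wallCount_self (m : ℕ) (w : ℝ) : wallCount m w w = 0 := by
  simp only [wallCount, card_eq_zero, filter_eq_empty_iff, not_lt, le_add_iff_nonneg_right]
  exact fun t _ => t.cast_nonneg

theorem wallCount_eq_min {m : ℕ} {w v : ℝ} (hwv : w < v) (hv : ∀ t ∈ Icc 1 m, v - w ≠ t) :
    (wallCount m w v : ℤ) = min ⌊v - w⌋ m := by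
  have hfloor : 0 ≤ ⌊v - w⌋ := Int.floor_nonneg.2 (sub_nonneg.2 hwv.le)
  have hwalls : {t ∈ Icc 1 m | w + (t : ℕ) < v} = Icc 1 (min ⌊v - w⌋.toNat m) := by
    ext t
    simp only [mem_filter, mem_Icc, le_min_iff]
    constructor
    · rintro ⟨⟨h1, htm⟩, htv⟩
      exact ⟨h1, (Int.le_toNat hfloor).2 (Int.le_floor.2 (by push_cast; linarith)), htm⟩
    · rintro ⟨h1, htv, htm⟩
      refine ⟨⟨h1, htm⟩, ?_⟩
      have hle : (t : ℝ) ≤ v - w := by exact_mod_cast Int.le_floor.1 ((Int.le_toNat hfloor).1 htv)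
      have := hv t (mem_Icc.2 ⟨h1, htm⟩)
      linarith [lt_of_le_of_ne hle this.symm]
  rw [wallCount, hwalls, Nat.card_Icc]
  omega

theorem wallsBelow_update {m C k : ℕ} (hk : k ≤ C + 1) (f : ℕ → ℝ) (v w : ℝ) :
    wallsBelow m (Function.update f (C + 1) v) k w = wallsBelow m f k w :=
  sum_congr rfl fun i hi => by rw [Function.update_of_ne (by simp at hi; omega)]

theorem IsGeneric.update {m C : ℕ} {f : ℕ → ℝ} {v : ℝ} (hf : IsGeneric m C f) (hv : f C < v)
    (hvf : ∀ i ≤ C, ∀ t ∈ Icc 1 m, v - f i ≠ t) :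
    IsGeneric m (C + 1) (Function.update f (C + 1) v) := by
  intro i j hij hj
  rw [Function.update_of_ne (by omega)]
  rcases hj.lt_or_eq with hj | rfl
  · rw [Function.update_of_ne (by omega)]
    exact hf i j hij (by omega)
  · rw [Function.update_self]
    refine ⟨lt_of_le_of_lt ?_ hv, hvf i (by omega)⟩
    rcases (Nat.le_of_lt_succ hij).lt_or_eq with hiC | rfl
    exacts [(hf i C hiC le_rfl).1.le, le_rfl]

theorem IsGeneric.add_ne_add {m C : ℕ} {f : ℕ → ℝ} (hf : IsGeneric m C f) {i j t s : ℕ}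
    (hij : i < j) (hj : j ≤ C) (ht : t ≤ m) : f i + t ≠ f j + s := by
  intro h
  obtain ⟨hlt, hwall⟩ := hf i j hij hj
  have hst : s < t := by exact_mod_cast (show (s : ℝ) < t by linarith)
  exact hwall (t - s) (mem_Icc.2 ⟨by omega, by omega⟩) (by push_cast [hst.le]; linarith)

theorem IsGeneric.exists_next {m C : ℕ} {f : ℕ → ℝ} (hf : IsGeneric m C f) {r : ℕ}
    (hlo : wallsBelow m f C (f C) ≤ r) (hhi : r ≤ (C + 1) * m) :
    ∃ v, f C < v ∧ (∀ i ≤ C, ∀ t ∈ Icc 1 m, v - f i ≠ t) ∧ wallsBelow m f (C + 1) v = r := by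
  set P := range (C + 1) ×ˢ Icc 1 m
  set g : ℕ × ℕ → ℝ := fun p => f p.1 + p.2
  have hinj : Set.InjOn g P := by
    rintro ⟨i, t⟩ hit ⟨j, s⟩ hjs hg
    simp only [P, coe_product, Set.mem_prod, mem_coe, mem_range, mem_Icc, g] at hit hjs hg
    rcases lt_trichotomy i j with hij | rfl | hji
    · exact absurd hg (hf.add_ne_add hij (by omega) hit.2.2)
    · simp_all
    · exact absurd hg.symm (hf.add_ne_add hji (by omega) hjs.2.2)
  have hcount : ∀ v, #{q ∈ P.image g | q < v} = wallsBelow m f (C + 1) v := by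
    intro v
    rw [filter_image, card_image_of_injOn (hinj.mono (filter_subset _ _)), card_filter,
      sum_product, wallsBelow]
    simp only [wallCount, card_filter, g]
  have hcard : #(P.image g) = (C + 1) * m := by
    rw [card_image_of_injOn hinj, card_product, card_range, Nat.card_Icc, Nat.add_sub_cancel]
  have hfC : f C ∉ P.image g := by
    simp only [P, mem_image, mem_product, mem_range, mem_Icc, Prod.exists, g, not_exists, not_and]
    intro i t ⟨hi, ht₁, ht₂⟩ hg
    rcases (Nat.le_of_lt_succ hi).lt_or_eq with hiC | rfl
    · exact hf.add_ne_add (s := 0) hiC le_rfl ht₂ (by simpa using hg)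
    · simp at hg; omega
  have hbelow : #{q ∈ P.image g | q ≤ f C} = wallsBelow m f C (f C) := by
    rw [← add_zero (wallsBelow m f C (f C)), ← wallCount_self m (f C), wallsBelow,
      ← sum_range_succ, ← wallsBelow, ← hcount]
    exact congrArg card (filter_congr fun q hq => (ne_of_mem_of_not_mem hq hfC).le_iff_lt)
  obtain ⟨v, hv, hvQ, hvr⟩ :=
    exists_gt_notMem_card_filter_lt_eq (P.image g) (f C) (hbelow ▸ hlo) (hcard ▸ hhi)
  refine ⟨v, hv, fun i hi t ht hvt => hvQ (mem_image.2 ⟨(i, t), ?_, ?_⟩), (hcount v).symm.trans hvr⟩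
  · exact mem_product.2 ⟨mem_range.2 (by omega), ht⟩
  · simp only [g]; linarith

def Realizes (n m : ℕ) (mu : ℕ → ℕ) (C : ℕ) (f : ℕ → ℝ) : Prop :=
  IsGeneric m C f ∧ ∀ c < C, wallsBelow m f (c + 1) (f (c + 1)) = mu (n - 2 - c)

theorem exists_realizes {n m : ℕ} {mu : ℕ → ℕ} (hanti : ∀ i j, i ≤ j → j < n → mu j ≤ mu i)
    (hbd : ∀ i < n, mu i ≤ (n - 1 - i) * m) : ∀ C ≤ n - 1, ∃ f, Realizes n m mu C f := by
  intro C
  induction C with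
  | zero => exact fun _ => ⟨0, fun i j hij hj => by omega, fun c hc => by omega⟩
  | succ C ih =>
    intro hC
    obtain ⟨f, hf, hcol⟩ := ih (by omega)
    have hlo : wallsBelow m f C (f C) ≤ mu (n - 2 - C) := by
      rcases C with _ | c
      · simp [wallsBelow]
      · rw [hcol c (by omega)]
        exact hanti _ _ (by omega) (by omega)
    have hhi : mu (n - 2 - C) ≤ (C + 1) * m := by
      simpa [show n - 1 - (n - 2 - C) = C + 1 by omega] using hbd (n - 2 - C) (by omega)
    obtain ⟨v, hv, hvf, hvr⟩ := hf.exists_next hlo hhi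
    refine ⟨Function.update f (C + 1) v, hf.update hv hvf, fun c hc => ?_⟩
    rw [wallsBelow_update (by omega)]
    rcases (Nat.le_of_lt_succ hc).lt_or_eq with hc | rfl
    · rw [Function.update_of_ne (by omega)]
      exact hcol c hc
    · rwa [Function.update_self]

theorem regionPoint_of_isGeneric {n m : ℕ} {f x : ℕ → ℝ} (hf : IsGeneric m (n - 1) f)
    (hx : SumZero n x) (hinn : ∀ i j, inn x i j = f (j + 1) - f i) : RegionPoint n m x := by
  refine ⟨hx, fun i j hij hj => ?_, fun i j hij hj t ht₁ ht₂ => ?_⟩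
  · rw [hinn, sub_pos]
    exact (hf i (j + 1) (by omega) (by omega)).1
  · rw [hinn]
    obtain ⟨hlt, hwall⟩ := hf i (j + 1) (by omega) (by omega)
    rcases le_or_gt t 0 with ht | ht
    · have : (t : ℝ) ≤ 0 := by exact_mod_cast ht
      linarith
    · lift t to ℕ using ht.le
      exact hwall t (mem_Icc.2 ⟨by omega, by omega⟩)

noncomputable def tabOfPoint (n m : ℕ) (x : ℕ → ℝ) (i j : ℕ) : ℤ :=
  if i ≤ j ∧ j + 2 ≤ n then min ⌊inn x i j⌋ m else 0

theorem normalized_tabOfPoint (n m : ℕ) (x : ℕ → ℝ) : Normalized n (tabOfPoint n m x) :=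
  fun _ _ h => if_neg h

theorem tabOf_tabOfPoint (n m : ℕ) (x : ℕ → ℝ) : TabOf n m x (tabOfPoint n m x) :=
  fun _ _ hij hj => if_pos ⟨hij, hj⟩

theorem sum_tabOfPoint {n m : ℕ} {f x : ℕ → ℝ} (hf : IsGeneric m (n - 1) f)
    (hinn : ∀ i j, inn x i j = f (j + 1) - f i) {C : ℕ} (hC : C + 2 ≤ n) :
    ∑ i ∈ range (C + 1), tabOfPoint n m x i C = wallsBelow m f (C + 1) (f (C + 1)) := by
  rw [wallsBelow, Nat.cast_sum]
  refine sum_congr rfl fun i hi => ?_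
  have hiC : i ≤ C := Nat.le_of_lt_succ (mem_range.1 hi)
  obtain ⟨hlt, hwall⟩ := hf i (C + 1) (by omega) (by omega)
  rw [tabOfPoint, if_pos ⟨hiC, hC⟩, hinn, wallCount_eq_min hlt hwall]

theorem column_sums_bijection_general (n m : ℕ) (mu : ℕ → ℕ)
    (hanti : ∀ i j, i ≤ j → j < n → mu j ≤ mu i)
    (hbd : ∀ i < n, mu i ≤ (n - 1 - i) * m) :
    ∃! e : ℕ → ℕ → ℤ, Normalized n e ∧ IsShiTab n m e ∧
      ∀ C, C + 2 ≤ n →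
        (∑ i ∈ Finset.range (C + 1), e i C) = (mu (n - 2 - C) : ℤ) := by
  obtain ⟨f, hf, hcol⟩ := exists_realizes hanti hbd (n - 1) le_rfl
  obtain ⟨x, hx₀, hinn⟩ := exists_sumZero_inn_eq n f
  have hx : RegionPoint n m x := regionPoint_of_isGeneric hf hx₀ hinn
  have hsum : ∀ C, C + 2 ≤ n → ∑ i ∈ range (C + 1), tabOfPoint n m x i C = (mu (n - 2 - C) : ℤ) :=
    fun C hC => by rw [sum_tabOfPoint hf hinn hC, hcol C (by omega)]
  refine ⟨tabOfPoint n m x,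
    ⟨normalized_tabOfPoint n m x, ⟨x, hx, tabOf_tabOfPoint n m x⟩, hsum⟩, ?_⟩
  rintro e ⟨he, ⟨y, hy, hye⟩, hesum⟩
  funext i j
  by_cases hij : i ≤ j ∧ j + 2 ≤ n
  · exact (shiRecurrence_of_tabOf hy hye).eq_of_colSum_eq
      (shiRecurrence_of_tabOf hx (tabOf_tabOfPoint n m x))
      (fun C hC => (hesum C hC).trans (hsum C hC).symm) j i hij.1 hij.2
  · rw [he i j hij, normalized_tabOfPoint n m x i j hij]

/-- column sums give a bijection from dominant `m`-Shi regions (identified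
with their normalized Shi tableaux) to partitions `μ` with `μ_n = 0` and
`μ_i ≤ (n-i)·m`: each such `μ` arises from exactly one region. -/
theorem column_sums_bijection (n m : ℕ) (hn : 2 ≤ n) (hm : 1 ≤ m) (mu : ℕ → ℕ)
    (hanti : ∀ i j, i ≤ j → j < n → mu j ≤ mu i) (hlast : mu (n - 1) = 0)
    (hbd : ∀ i < n, mu i ≤ (n - 1 - i) * m) :
    ∃! e : ℕ → ℕ → ℤ, Normalized n e ∧ IsShiTab n m e ∧
      ∀ C, C + 2 ≤ n →
        (∑ i ∈ Finset.range (C + 1), e i C) = (mu (n - 2 - C) : ℤ) :=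
  column_sums_bijection_general n m mu hanti hbd

end Shi
end

section
/- The number of partitions μ = (μ_1, …, μ_n) with μ_1 ≥ ⋯ ≥ μ_n = 0 and μ_i ≤ (n−i)m for all i equals the Fuss–Catalan number (1/(mn+1))·binomial((m+1)n, n). -/
/-!
Partitions with at most `y` parts whose `i`-th part (from `0`) satisfies `μ i + m (i + 1) ≤ x`
are lattice paths below a line of slope `1/m`; call their number `f x y`. Splitting according to
whether part `y` is zero or the first column, of length `y + 1`, can be removed gives the ballot
recursion `f (x+1) (y+1) = f x (y+1) + f (x+1) y`, and the ballot numbers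
`(x + 1 - m y) / (x + 1) · C(x + y, y)` satisfy it together with the boundary values. The theorem
is the case `x = m n`, `y = n`, where the bound on the last part forces it to vanish.
-/

namespace Shi

def staircase (m x y : ℕ) : Set (ℕ → ℕ) :=
  {μ | Antitone μ ∧ (∀ i, y ≤ i → μ i = 0) ∧ ∀ i < y, μ i + m * (i + 1) ≤ x}

theorem staircase_finite (m x y : ℕ) : (staircase m x y).Finite := by
  refine (Set.finite_range fun f : Fin y → Fin (x + 1) =>
    fun i => if h : i < y then (f ⟨i, h⟩ : ℕ) else 0).subset ?_
  rintro μ ⟨-, hzero, hbound⟩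
  refine ⟨fun i => ⟨μ i, by have := hbound i i.2; omega⟩, funext fun i => ?_⟩
  dsimp only
  split_ifs with h
  · rfl
  · exact (hzero i (not_lt.mp h)).symm

section

variable {m x y : ℕ}

theorem staircase_eq_singleton_zero (h : m * y ≤ x) (hxy : y = 0 ∨ x ≤ m) :
    staircase m x y = {0} := by
  ext μ
  simp only [staircase, Set.mem_ofPred_eq, Set.mem_singleton_iff]
  constructor
  · rintro ⟨-, hzero, hbound⟩
    funext i
    by_cases hi : i < y
    · have := hbound i hi
      have : m ≤ m * (i + 1) := Nat.le_mul_of_pos_right m (by omega)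
      simp only [Pi.zero_apply]
      omega
    · exact hzero i (not_lt.mp hi)
  · rintro rfl
    refine ⟨antitone_const, fun _ _ => rfl, fun i hi => ?_⟩
    have := Nat.mul_le_mul_left m (show i + 1 ≤ y from hi)
    simp only [Pi.zero_apply]
    omega

theorem staircase_succ_eq_empty (h : x < m * (y + 1)) : staircase m x (y + 1) = ∅ :=
  Set.eq_empty_of_forall_notMem fun _ ⟨_, _, hbound⟩ => by
    have := hbound y y.lt_succ_self
    omega

def firstColumn (k : ℕ) : ℕ → ℕ := fun i => if i < k then 1 else 0

theorem antitone_firstColumn (k : ℕ) : Antitone (firstColumn k) := by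
  intro a b hab
  simp only [firstColumn]
  split_ifs <;> omega

theorem staircase_succ_succ (h : m * (y + 1) ≤ x + 1) :
    staircase m (x + 1) (y + 1) =
      staircase m (x + 1) y ∪ (· + firstColumn (y + 1)) '' staircase m x (y + 1) := by
  ext μ
  constructor
  · rintro ⟨hanti, hzero, hbound⟩
    by_cases hy : μ y = 0
    · refine Or.inl ⟨hanti, fun i hi => ?_, fun i hi => hbound i (by omega)⟩
      rcases hi.eq_or_lt with rfl | hi
      exacts [hy, hzero i hi]
    · have hpos : ∀ i ≤ y, 1 ≤ μ i := fun i hi => by have := hanti hi; omega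
      refine Or.inr ⟨μ - firstColumn (y + 1), ⟨fun a b hab => ?_, fun i hi => ?_, fun i hi => ?_⟩, ?_⟩
      · have := hanti hab
        by_cases hb : b ≤ y
        · simp only [Pi.sub_apply, firstColumn, show a < y + 1 by omega, show b < y + 1 by omega,
            if_true]
          omega
        · simp only [Pi.sub_apply, hzero b (by omega), Nat.zero_sub, zero_le]
      · simp [firstColumn, hzero i hi, show ¬ i < y + 1 by omega]
      · have := hbound i hi
        have := hpos i (by omega)
        simp only [Pi.sub_apply, firstColumn, hi, if_true]
        omega
      · funext i
        by_cases hi : i ≤ y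
        · have := hpos i hi
          simp only [Pi.add_apply, Pi.sub_apply, firstColumn, show i < y + 1 by omega, if_true]
          omega
        · simp [firstColumn, hzero i (by omega), show y < i by omega]
  · rintro (⟨hanti, hzero, hbound⟩ | ⟨ν, ⟨hanti, hzero, hbound⟩, rfl⟩)
    · refine ⟨hanti, fun i hi => hzero i (by omega), fun i hi => ?_⟩
      rcases (Nat.lt_succ_iff.mp hi).lt_or_eq with hi | rfl
      · have := hbound i hi
        omega
      · rw [hzero i le_rfl]
        omega
    · refine ⟨hanti.add (antitone_firstColumn _), fun i hi => ?_, fun i hi => ?_⟩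
      · simp [firstColumn, hzero i hi, show ¬ i < y + 1 by omega]
      · have := hbound i hi
        simp only [Pi.add_apply, firstColumn, hi, if_true]
        omega

theorem ncard_staircase_succ_succ (h : m * (y + 1) ≤ x + 1) :
    (staircase m (x + 1) (y + 1)).ncard =
      (staircase m x (y + 1)).ncard + (staircase m (x + 1) y).ncard := by
  have hdisj : Disjoint (staircase m (x + 1) y)
      ((· + firstColumn (y + 1)) '' staircase m x (y + 1)) := by
    refine Set.disjoint_left.mpr ?_
    rintro _ ⟨-, hzero, -⟩ ⟨ν, -, rfl⟩
    simpa [firstColumn] using hzero y le_rfl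
  rw [staircase_succ_succ h, Set.ncard_union_eq hdisj (staircase_finite ..)
    ((staircase_finite ..).image _), Set.ncard_image_of_injective _ (add_left_injective _),
    add_comm]

theorem succ_mul_ncard_staircase_add (h : m * y ≤ x) :
    (x + 1) * (staircase m x y).ncard + m * y * (x + y).choose y = (x + 1) * (x + y).choose y := by
  induction x generalizing y with
  | zero =>
    rw [staircase_eq_singleton_zero h (Or.inr (Nat.zero_le m)), Set.ncard_singleton,
      show m * y = 0 by omega]
    simp
  | succ x ihx =>
    induction y with
    | zero => simp [staircase_eq_singleton_zero (Nat.zero_le _) (Or.inl rfl)]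
    | succ y ihy =>
      have hA : (x + 1) * (staircase m x (y + 1)).ncard + m * (y + 1) * (x + y + 1).choose (y + 1)
          = (x + 1) * (x + y + 1).choose (y + 1) := by
        by_cases hx : m * (y + 1) ≤ x
        · exact ihx hx
        · rw [staircase_succ_eq_empty (by omega), Set.ncard_empty, show m * (y + 1) = x + 1 by omega]
          ring
      have hB := ihy (le_trans (Nat.mul_le_mul_left m y.le_succ) h)
      rw [show x + 1 + y = x + y + 1 by ring] at hB
      have hpascal := Nat.choose_succ_succ' (x + y + 1) y
      have hratio := Nat.choose_succ_right_eq (x + y + 1) y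
      rw [show x + y + 1 - y = x + 1 by omega] at hratio
      rw [ncard_staircase_succ_succ h, show x + 1 + (y + 1) = x + y + 1 + 1 by ring, hpascal]
      refine Nat.eq_of_mul_eq_mul_left x.succ_pos ?_
      zify at hA hB hratio ⊢
      linear_combination (x + 2) * hA + (x + 1) * hB - m * hratio

end

theorem staircase_mul_eq (m n : ℕ) : staircase m (m * n) n =
    {μ | Antitone μ ∧ (∀ i, n - 1 ≤ i → μ i = 0) ∧ ∀ i < n, μ i ≤ (n - 1 - i) * m} := by
  have hsplit : ∀ i < n, (n - 1 - i) * m + m * (i + 1) = m * n := fun i hi => by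
    rw [mul_comm, ← mul_add]
    congr 1
    omega
  ext μ
  refine and_congr_right fun _ => ⟨fun ⟨hzero, hbound⟩ => ⟨fun i hi => ?_, fun i hi => ?_⟩,
    fun ⟨hzero, hbound⟩ => ⟨fun i hi => hzero i (by omega), fun i hi => ?_⟩⟩
  · rcases lt_or_ge i n with hin | hin
    · have := hsplit i hin
      rw [show n - 1 - i = 0 by omega, zero_mul] at this
      linarith [hbound i hin]
    · exact hzero i hin
  · linarith [hbound i hi, hsplit i hi]
  · linarith [hbound i hi, hsplit i hi]

theorem staircase_partition_count_general (n m : ℕ) :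
    (m * n + 1) * Nat.card {mu : ℕ → ℕ // Antitone mu ∧
      (∀ i, n - 1 ≤ i → mu i = 0) ∧ ∀ i < n, mu i ≤ (n - 1 - i) * m} =
    Nat.choose ((m + 1) * n) n := by
  have hcount := succ_mul_ncard_staircase_add (le_refl (m * n))
  rw [← Set.coe_ofPred, ← staircase_mul_eq, Nat.card_coe_set_eq,
    show (m + 1) * n = m * n + n by ring]
  linarith

/-- the number of partitions `μ = (μ_1, …, μ_n)` with `μ_n = 0` and
`μ_i ≤ (n-i)·m` is the Fuss–Catalan number `(1/(mn+1))·C((m+1)n, n)`. -/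
theorem staircase_partition_count (n m : ℕ) (hn : 1 ≤ n) (hm : 1 ≤ m) :
    (m * n + 1) * Nat.card {mu : ℕ → ℕ // Antitone mu ∧
      (∀ i, n - 1 ≤ i → mu i = 0) ∧ ∀ i < n, mu i ≤ (n - 1 - i) * m} =
    Nat.choose ((m + 1) * n) n :=
  staircase_partition_count_general n m

end Shi
end

section
/- If {e_{ij}}_{1≤i≤j≤n−1} is the Shi tableau of a dominant region of the m-Shi arrangement of type A_{n−1}, then the conjugate family e'_{ij} = e_{n−j, n−i} is also the Shi tableau of a dominant region, and H_{α_{ij}, m} is a separating wall for the first region if and only if H_{α_{n−j,n−i}, m} is a separating wall for the conjugate region. -/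
open Finset

namespace Shi

/-- The image of `x` under `-w₀`, which preserves the dominant chamber and the `m`-Shi
arrangement. -/
def conj (n : ℕ) (x : ℕ → ℝ) : ℕ → ℝ := fun i => -x (n - 1 - i)

lemma inn_conj {n : ℕ} (x : ℕ → ℝ) {i : ℕ} (j : ℕ) (hi : i + 2 ≤ n) :
    inn (conj n x) i j = inn x (n - 2 - j) (n - 2 - i) := by
  simp only [inn, conj]
  rw [show n - 1 - (j + 1) = n - 2 - j by omega,
    show n - 2 - i + 1 = n - 1 - i by omega]
  ring

lemma sumZero_conj {n : ℕ} {x : ℕ → ℝ} (hx : SumZero n x) : SumZero n (conj n x) := by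
  simp only [SumZero, conj, Finset.sum_neg_distrib, neg_eq_zero]
  rw [Finset.sum_range_reflect x n]
  exact hx

lemma regionPoint_conj {n m : ℕ} {x : ℕ → ℝ} (hx : RegionPoint n m x) :
    RegionPoint n m (conj n x) := by
  obtain ⟨hsum, hpos, hoff⟩ := hx
  refine ⟨sumZero_conj hsum, fun i j hij hjn => ?_, fun i j hij hjn => ?_⟩
  · rw [inn_conj x j (by omega)]
    exact hpos _ _ (by omega) (by omega)
  · rw [inn_conj x j (by omega)]
    exact hoff _ _ (by omega) (by omega)

lemma tabOf_conj {n m : ℕ} {x : ℕ → ℝ} {e : ℕ → ℕ → ℤ} (h : TabOf n m x e) :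
    TabOf n m (conj n x) (fun i j => e (n - 2 - j) (n - 2 - i)) := by
  intro i j hij hjn
  rw [inn_conj x j (by omega)]
  exact h _ _ (by omega) (by omega)

lemma tabOf_congr {n m : ℕ} {x : ℕ → ℝ} {e e' : ℕ → ℕ → ℤ}
    (hee' : ∀ i j, i ≤ j → j + 2 ≤ n → e i j = e' i j) (h : TabOf n m x e) :
    TabOf n m x e' := fun i j hij hjn => (hee' i j hij hjn).symm.trans (h i j hij hjn)

lemma inClosure_conj {n m : ℕ} {x p : ℕ → ℝ} (h : InClosure n m x p) :
    InClosure n m (conj n x) (conj n p) := by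
  obtain ⟨hsum, hside⟩ := h
  refine ⟨sumZero_conj hsum, fun i j hij hjn => ?_⟩
  rw [inn_conj x j (by omega), inn_conj p j (by omega)]
  exact hside _ _ (by omega) (by omega)

lemma sepWall_conj {n m : ℕ} {x : ℕ → ℝ} {u v : ℕ} (hu : u + 2 ≤ n) (hv : v + 2 ≤ n)
    (h : SepWall n m x u v) : SepWall n m (conj n x) (n - 2 - v) (n - 2 - u) := by
  obtain ⟨hfar, p, hp, hpwall, hpoff⟩ := h
  have hu' : n - 2 - (n - 2 - u) = u := by omega
  have hv' : n - 2 - (n - 2 - v) = v := by omega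
  refine ⟨?_, conj n p, inClosure_conj hp, ?_, fun i j hij hjn t ht₁ ht₂ hne => ?_⟩
  · rwa [inn_conj x _ (by omega), hu', hv']
  · rwa [inn_conj p _ (by omega), hu', hv']
  · rw [inn_conj p j (by omega)]
    refine hpoff _ _ (by omega) (by omega) t ht₁ ht₂ fun ⟨hj, hi, htm⟩ => hne ⟨?_, ?_, htm⟩ <;>
      omega

lemma sepWallTab_conj {n m : ℕ} {e : ℕ → ℕ → ℤ} {u v : ℕ} (hu : u + 2 ≤ n) (hv : v + 2 ≤ n)
    (h : SepWallTab n m e u v) :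
    SepWallTab n m (fun i j => e (n - 2 - j) (n - 2 - i)) (n - 2 - v) (n - 2 - u) := by
  obtain ⟨x, hx, ht, hw⟩ := h
  exact ⟨conj n x, regionPoint_conj hx, tabOf_conj ht, sepWall_conj hu hv hw⟩

lemma sepWallTab_congr {n m : ℕ} {e e' : ℕ → ℕ → ℤ} {u v : ℕ}
    (hee' : ∀ i j, i ≤ j → j + 2 ≤ n → e i j = e' i j) (h : SepWallTab n m e u v) :
    SepWallTab n m e' u v := by
  obtain ⟨x, hx, ht, hw⟩ := h
  exact ⟨x, hx, tabOf_congr hee' ht, hw⟩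

theorem conjugate_tableau_general (n m : ℕ) (e : ℕ → ℕ → ℤ)
    (he : IsShiTab n m e) :
    IsShiTab n m (fun i j => e (n - 2 - j) (n - 2 - i)) ∧
    ∀ u v, u ≤ v → v + 2 ≤ n →
      (SepWallTab n m e u v ↔
        SepWallTab n m (fun i j => e (n - 2 - j) (n - 2 - i)) (n - 2 - v) (n - 2 - u)) := by
  obtain ⟨x, hx, ht⟩ := he
  refine ⟨⟨conj n x, regionPoint_conj hx, tabOf_conj ht⟩, fun u v huv hvn =>
    ⟨sepWallTab_conj (by omega) hvn, fun h => ?_⟩⟩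
  have hdouble := sepWallTab_conj (by omega) (by omega) h
  rw [show n - 2 - (n - 2 - u) = u by omega, show n - 2 - (n - 2 - v) = v by omega] at hdouble
  refine sepWallTab_congr (fun i j hij hjn => ?_) hdouble
  rw [show n - 2 - (n - 2 - i) = i by omega, show n - 2 - (n - 2 - j) = j by omega]

/-- the conjugate of a Shi tableau is a Shi tableau, and `H_{α_{ij},m}` is a
separating wall for the region iff `H_{α_{n-j,n-i},m}` is one for the conjugate region. -/
theorem conjugate_tableau (n m : ℕ) (hn : 2 ≤ n) (hm : 1 ≤ m) (e : ℕ → ℕ → ℤ)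
    (he : IsShiTab n m e) :
    IsShiTab n m (fun i j => e (n - 2 - j) (n - 2 - i)) ∧
    ∀ u v, u ≤ v → v + 2 ≤ n →
      (SepWallTab n m e u v ↔
        SepWallTab n m (fun i j => e (n - 2 - j) (n - 2 - i)) (n - 2 - v) (n - 2 - u)) :=
  conjugate_tableau_general n m e he

end Shi
end

section
/- If {e_{ij}}_{1≤i≤j≤n−1} is the Shi tableau of a dominant region of the m-Shi arrangement of type A_{n−1}, then the restriction {e_{ij}}_{1≤i≤j≤n−2} (removing the first column) is the Shi tableau of a dominant region of the m-Shi arrangement of type A_{n−2}. Moreover, for u ≤ v ≤ n−2, H_{α_{uv},m} is a separating wall for the original region if and only if it is for the restricted region. -/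
/-!
Restricting a point of the region to its first `n - 1` coordinates (recentred to sum zero)
keeps every `⟨x, α_ij⟩` with `j ≤ n - 3`, so the tableau and any facet point of a wall restrict.

Conversely, let `q` be a facet point of `H_{α_uv,m}` for the restricted region. Each `⟨q, α_ij⟩`
lies in the open cell of the integer `e_ij` (or, when `e_ij = m`, possibly on `H_{α_ij,m}`), and
`q` lifts once we find a last coordinate `s` with `q_i - s` in the open cell of `e_{i,n-2}` for
every `i`. These cells are intervals, so it suffices that they meet pairwise; this follows from
the tableau inequalities `e_ij + e_{j+1,l} ≤ e_il ≤ e_ij + e_{j+1,l} + 1` (the first one when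
`e_il < m`), read off from `⟨x, α_il⟩ = ⟨x, α_ij⟩ + ⟨x, α_{j+1,l}⟩` for a point `x` of the
full region.
-/

open Finset

namespace Shi

noncomputable def centered (k : ℕ) (x : ℕ → ℝ) : ℕ → ℝ :=
  fun i => x i - (∑ t ∈ range k, x t) / k

@[simp]
lemma inn_centered (k : ℕ) (x : ℕ → ℝ) (i j : ℕ) : inn (centered k x) i j = inn x i j := by
  simp only [inn, centered]
  ring

lemma sumZero_centered {k : ℕ} (hk : k ≠ 0) (x : ℕ → ℝ) : SumZero k (centered k x) := by
  have hk' : (k : ℝ) ≠ 0 := Nat.cast_ne_zero.mpr hk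
  simp only [SumZero, centered, sum_sub_distrib, sum_const, card_range, nsmul_eq_mul]
  field_simp
  ring

lemma inn_add_inn (x : ℕ → ℝ) (i j l : ℕ) : inn x i j + inn x (j + 1) l = inn x i l := by
  simp only [inn]
  ring

def Generic (m : ℕ) (a : ℝ) : Prop :=
  ∀ t : ℤ, -(m : ℤ) < t → t ≤ m → a ≠ t

/-- `a` lies in the open interval cut out by the integers in `(-m, m]` on which
`min ⌊a⌋ m = c`: `(c, c + 1)` if `c < m`, and `(m, ∞)` if `c = m`. -/
def InCell (m : ℕ) (c : ℤ) (a : ℝ) : Prop :=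
  (c : ℝ) < a ∧ (c < m → a < c + 1)

section Cells

variable {m : ℕ} {a b : ℝ} {c t : ℤ}

lemma Generic.intCast_lt_iff (ha : Generic m a) (ht : -(m : ℤ) < t) (htm : t ≤ m) :
    (t : ℝ) < a ↔ t ≤ min ⌊a⌋ (m : ℤ) := by
  rw [le_min_iff, Int.le_floor, and_iff_left htm]
  exact ⟨le_of_lt, fun h => h.lt_of_ne (ha t ht htm).symm⟩

lemma Generic.intCast_lt_iff_of_min_floor_eq (ha : Generic m a) (hb : Generic m b)
    (hab : min ⌊a⌋ (m : ℤ) = min ⌊b⌋ m) (ht : -(m : ℤ) < t) (htm : t ≤ m) :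
    (t : ℝ) < a ↔ t < b := by
  rw [ha.intCast_lt_iff ht htm, hb.intCast_lt_iff ht htm, hab]

lemma Generic.lt_intCast_iff (ha : Generic m a) (ht : -(m : ℤ) < t) (htm : t ≤ m) :
    a < t ↔ ¬(t : ℝ) < a :=
  ⟨fun h => lt_asymm h, fun h => (lt_or_gt_of_ne (ha t ht htm)).resolve_right h⟩

lemma Generic.closure_cond_of_min_floor_eq {d : ℝ} (ha : Generic m a) (hb : Generic m b)
    (hab : min ⌊a⌋ (m : ℤ) = min ⌊b⌋ m) (ht : -(m : ℤ) < t) (htm : t ≤ m)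
    (h : ((t : ℝ) < b → (t : ℝ) ≤ d) ∧ (b < t → d ≤ t)) :
    ((t : ℝ) < a → (t : ℝ) ≤ d) ∧ (a < t → d ≤ t) := by
  rw [ha.lt_intCast_iff ht htm, ha.intCast_lt_iff_of_min_floor_eq hb hab ht htm,
    ← hb.lt_intCast_iff ht htm]
  exact h

lemma InCell.min_floor_eq (h : InCell m c a) (hc : c ≤ m) : min ⌊a⌋ (m : ℤ) = c := by
  have hca : c ≤ ⌊a⌋ := Int.le_floor.mpr h.1.le
  rcases hc.lt_or_eq with hcm | rfl
  · have : ⌊a⌋ = c := Int.floor_eq_iff.mpr ⟨h.1.le, h.2 hcm⟩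
    omega
  · omega

lemma InCell.generic (h : InCell m c a) (hc : c ≤ m) : Generic m a := by
  rintro t - htm rfl
  have hct : c < t := by exact_mod_cast h.1
  have htc : c < m → t < c + 1 := fun hcm => by exact_mod_cast h.2 hcm
  omega

lemma min_floor_add_min_floor_le (ha : 0 ≤ a) (hb : 0 ≤ b) (h : min ⌊a + b⌋ (m : ℤ) < m) :
    min ⌊a⌋ (m : ℤ) + min ⌊b⌋ m ≤ min ⌊a + b⌋ m := by
  have := Int.floor_nonneg.mpr ha
  have := Int.floor_nonneg.mpr hb
  have := Int.le_floor_add a b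
  omega

lemma min_floor_add_le (ha : 0 ≤ a) (hb : 0 ≤ b) :
    min ⌊a + b⌋ (m : ℤ) ≤ min ⌊a⌋ (m : ℤ) + min ⌊b⌋ m + 1 := by
  have := Int.floor_nonneg.mpr ha
  have := Int.floor_nonneg.mpr hb
  have := Int.le_floor_add_floor a b
  omega

lemma exists_forall_inCell_sub {N : ℕ} {c : ℕ → ℤ} {q : ℕ → ℝ}
    (h : ∀ i < N, ∀ k < N, c i < m → q i - q k < c i - c k + 1) :
    ∃ s, ∀ i < N, InCell m (c i) (q i - s) := by
  classical
  obtain ⟨s, hlo, hhi⟩ := Order.exists_between_finsets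
    (((range N).filter (c · < m)).image fun i => q i - c i - 1)
    ((range N).image fun k => q k - c k) (by
      simp only [mem_image, mem_filter, mem_range]
      rintro _ ⟨i, ⟨hi, hci⟩, rfl⟩ _ ⟨k, hk, rfl⟩
      linarith [h i hi k hk hci])
  refine ⟨s, fun i hi => ⟨?_, fun hci => ?_⟩⟩
  · linarith [hhi _ (mem_image_of_mem _ (mem_range.2 hi))]
  · linarith [hlo _ (mem_image_of_mem _ (mem_filter.2 ⟨mem_range.2 hi, hci⟩))]

end Cells

def OnlyOnWall (n m : ℕ) (p : ℕ → ℝ) (u v : ℕ) : Prop :=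
  ∀ i j, i ≤ j → j + 2 ≤ n → ∀ t : ℤ, -(m : ℤ) < t → t ≤ m →
    ¬(i = u ∧ j = v ∧ t = (m : ℤ)) → inn p i j ≠ (t : ℝ)

/-- Every `⟨q, α_ij⟩` lies in the open cell of `e i j`, or on the hyperplane
`H_{α_ij,m}` bounding it when `e i j = m`. -/
def InCellsOrWalls (n m : ℕ) (e : ℕ → ℕ → ℤ) (q : ℕ → ℝ) : Prop :=
  ∀ i j, i ≤ j → j + 2 ≤ n → (e i j : ℝ) ≤ inn q i j ∧ (e i j < m → InCell m (e i j) (inn q i j))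

section Restrict

variable {n m k : ℕ} {x : ℕ → ℝ} {e : ℕ → ℕ → ℤ} {i j : ℕ}

lemma RegionPoint.inn_pos (hx : RegionPoint n m x) (hij : i ≤ j) (hj : j + 2 ≤ n) :
    0 < inn x i j :=
  hx.2.1 i j hij hj

lemma RegionPoint.generic (hx : RegionPoint n m x) (hij : i ≤ j) (hj : j + 2 ≤ n) :
    Generic m (inn x i j) :=
  hx.2.2 i j hij hj

lemma TabOf.le (he : TabOf n m x e) (hij : i ≤ j) (hj : j + 2 ≤ n) : e i j ≤ m := by
  rw [he i j hij hj]
  exact min_le_right _ _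

lemma TabOf.nonneg (he : TabOf n m x e) (hx : RegionPoint n m x) (hij : i ≤ j)
    (hj : j + 2 ≤ n) : 0 ≤ e i j := by
  rw [he i j hij hj]
  exact le_min (Int.floor_nonneg.mpr (hx.inn_pos hij hj).le) (Int.natCast_nonneg m)

lemma RegionPoint.restrict (hx : RegionPoint n m x) (hk : k ≠ 0) (hkn : k ≤ n) :
    RegionPoint k m (centered k x) := by
  refine ⟨sumZero_centered hk x, fun i j hij hj => ?_, fun i j hij hj => ?_⟩ <;>
    rw [inn_centered]
  · exact hx.inn_pos hij (by omega)
  · exact hx.generic hij (by omega)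

lemma TabOf.restrict (he : TabOf n m x e) (hkn : k ≤ n) : TabOf k m (centered k x) e :=
  fun i j hij hj => by rw [inn_centered]; exact he i j hij (by omega)

lemma SepWall.restrict {u v : ℕ} (h : SepWall n m x u v) (hk : k ≠ 0) (hkn : k ≤ n) :
    SepWall k m (centered k x) u v := by
  obtain ⟨hxuv, p, ⟨-, hcl⟩, hpuv, hp⟩ := h
  refine ⟨by rwa [inn_centered], centered k p, ⟨sumZero_centered hk p, ?_⟩,
    by rwa [inn_centered], ?_⟩
  · intro i j hij hj
    simpa only [inn_centered] using hcl i j hij (by omega)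
  · intro i j hij hj
    simpa only [inn_centered] using hp i j hij (by omega)

end Restrict

section LastColumn

variable {n m : ℕ} {e : ℕ → ℕ → ℤ} {x y q : ℕ → ℝ}

lemma inCellsOrWalls_of_onlyOnWall {u v : ℕ} (hm : 1 ≤ m) (hy : RegionPoint n m y)
    (hye : TabOf n m y e) (heuv : e u v = m) (hcl : InClosure n m y q)
    (hq : OnlyOnWall n m q u v) : InCellsOrWalls n m e q := by
  intro i j hij hj
  have hc := hye i j hij hj
  have hc0 := hye.nonneg hy hij hj
  have hcm := hye.le hij hj
  have hlow : (e i j : ℝ) ≤ inn q i j :=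
    (hcl.2 i j hij hj _ (by omega) hcm).1
      (((hy.generic hij hj).intCast_lt_iff (by omega) hcm).2 hc.le)
  refine ⟨hlow, fun hlt => ⟨hlow.lt_of_ne (hq i j hij hj _ (by omega) hcm (by omega)).symm, ?_⟩⟩
  have hup : inn y i j < (e i j + 1 : ℤ) := Int.floor_lt.mp (by omega)
  have hle := (hcl.2 i j hij hj (e i j + 1) (by omega) (by omega)).2 hup
  have hne := hq i j hij hj (e i j + 1) (by omega) (by omega) (by rintro ⟨rfl, rfl, -⟩; omega)
  exact fun _ => by exact_mod_cast hle.lt_of_ne hne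

variable (hx : RegionPoint (n + 2) m x) (hxe : TabOf (n + 2) m x e)
  (hq : InCellsOrWalls (n + 1) m e q)
include hx hxe hq

lemma inn_lt_sub_lastColumn {i j : ℕ} (hij : i ≤ j) (hjn : j < n) (hi : e i n < m) :
    inn q i j < e i n - e (j + 1) n + 1 := by
  have ha := hx.inn_pos (i := i) (j := j) hij (by omega)
  have hb := hx.inn_pos (i := j + 1) (j := n) (by omega) (by omega)
  have hsup := min_floor_add_min_floor_le ha.le hb.le (m := m)
  rw [inn_add_inn, ← hxe i j hij (by omega), ← hxe (j + 1) n (by omega) (by omega),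
    ← hxe i n (by omega) (by omega)] at hsup
  have hlast := hxe.nonneg hx (i := j + 1) (j := n) (by omega) (by omega)
  have hcell := ((hq i j hij (by omega)).2 (by omega)).2 (by omega)
  have : (e i j : ℝ) + e (j + 1) n ≤ e i n := by exact_mod_cast hsup hi
  linarith

lemma sub_lastColumn_lt_inn {k j : ℕ} (hkj : k ≤ j) (hjn : j < n) :
    (e k n : ℝ) - e (j + 1) n - 1 < inn q k j := by
  have ha := hx.inn_pos (i := k) (j := j) hkj (by omega)
  have hb := hx.inn_pos (i := j + 1) (j := n) (by omega) (by omega)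
  have hsub := min_floor_add_le ha.le hb.le (m := m)
  rw [inn_add_inn, ← hxe k j hkj (by omega), ← hxe (j + 1) n (by omega) (by omega),
    ← hxe k n (by omega) (by omega)] at hsub
  have hlast := hxe.nonneg hx (i := j + 1) (j := n) (by omega) (by omega)
  have hkn := hxe.le (i := k) (j := n) (by omega) (by omega)
  rcases (hxe.le (i := k) (j := j) hkj (by omega)).lt_or_eq with hkj_lt | hkj_eq
  · have hcell := ((hq k j hkj (by omega)).2 hkj_lt).1
    have : (e k n : ℝ) ≤ e k j + e (j + 1) n + 1 := by exact_mod_cast hsub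
    linarith
  · have hwall := (hq k j hkj (by omega)).1
    rw [hkj_eq] at hwall
    have : (e k n : ℝ) ≤ m := by exact_mod_cast hkn
    have : (0 : ℝ) ≤ e (j + 1) n := by exact_mod_cast hlast
    push_cast at hwall
    linarith

/-- The cells of the last column, shifted by `q`, meet pairwise. -/
lemma sub_lt_lastColumn_sub_add_one :
    ∀ i < n + 1, ∀ k < n + 1, e i n < m → q i - q k < e i n - e k n + 1 := by
  intro i hi k hk hin
  rcases lt_trichotomy i k with hik | rfl | hki
  · obtain ⟨j, rfl⟩ : ∃ j, k = j + 1 := ⟨k - 1, by omega⟩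
    exact inn_lt_sub_lastColumn hx hxe hq (by omega) (by omega) hin
  · linarith
  · obtain ⟨j, rfl⟩ : ∃ j, i = j + 1 := ⟨i - 1, by omega⟩
    have := sub_lastColumn_lt_inn hx hxe hq (k := k) (j := j) (by omega) (by omega)
    simp only [inn] at this
    linarith

end LastColumn

section Lift

variable {n m : ℕ} {e : ℕ → ℕ → ℤ} {x y : ℕ → ℝ} {u v : ℕ}

lemma SepWall.lift (hm : 1 ≤ m) (hx : RegionPoint (n + 2) m x) (hxe : TabOf (n + 2) m x e)
    (hy : RegionPoint (n + 1) m y) (hye : TabOf (n + 1) m y e) (huv : u ≤ v)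
    (hv : v + 2 ≤ n + 1) (h : SepWall (n + 1) m y u v) : SepWall (n + 2) m x u v := by
  obtain ⟨hyuv, q, hcl, hquv, hq⟩ := h
  have hsame : ∀ i j, i ≤ j → j + 2 ≤ n + 1 → min ⌊inn x i j⌋ (m : ℤ) = min ⌊inn y i j⌋ m :=
    fun i j hij hj => by rw [← hxe i j hij (by omega), ← hye i j hij hj]
  have heuv : e u v = m := by
    have := hye u v huv hv
    have : (m : ℤ) ≤ ⌊inn y u v⌋ := Int.le_floor.mpr (by exact_mod_cast hyuv.le)
    omega
  have hxuv : (m : ℝ) < inn x u v := by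
    have := ((hx.generic huv (by omega)).intCast_lt_iff_of_min_floor_eq (hy.generic huv hv)
      (hsame u v huv hv) (t := m) (by omega) le_rfl).2 (by exact_mod_cast hyuv)
    exact_mod_cast this
  obtain ⟨s, hs⟩ := exists_forall_inCell_sub (N := n + 1) (c := (e · n)) (q := q)
    (sub_lt_lastColumn_sub_add_one hx hxe
      (inCellsOrWalls_of_onlyOnWall hm hy hye heuv hcl hq))
  set p := centered (n + 2) (Function.update q (n + 1) s)
  have hp_old : ∀ i j, i ≤ j → j + 2 ≤ n + 1 → inn p i j = inn q i j := fun i j hij hj => by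
    rw [inn_centered]
    simp only [inn, Function.update_of_ne (show i ≠ n + 1 by omega),
      Function.update_of_ne (show j + 1 ≠ n + 1 by omega)]
  have hp_new : ∀ i ≤ n, inn p i n = q i - s := fun i hi => by
    rw [inn_centered]
    simp only [inn, Function.update_of_ne (show i ≠ n + 1 by omega), Function.update_self]
  refine ⟨hxuv, p, ⟨sumZero_centered (by omega) _, fun i j hij hj t ht htm => ?_⟩,
    by rw [hp_old u v huv hv]; exact hquv, fun i j hij hj t ht htm hne => ?_⟩
  · rcases (show j + 2 ≤ n + 1 ∨ n = j by omega) with hj' | rfl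
    · rw [hp_old i j hij hj']
      exact (hx.generic hij hj).closure_cond_of_min_floor_eq (hy.generic hij hj')
        (hsame i j hij hj') ht htm (hcl.2 i j hij hj' t ht htm)
    · have hle := hxe.le hij hj
      rw [hp_new i hij]
      exact (hx.generic hij hj).closure_cond_of_min_floor_eq ((hs i (by omega)).generic hle)
        (by rw [(hs i (by omega)).min_floor_eq hle, hxe i n hij hj]) ht htm
        ⟨le_of_lt, le_of_lt⟩
  · rcases (show j + 2 ≤ n + 1 ∨ n = j by omega) with hj' | rfl
    · rw [hp_old i j hij hj']
      exact hq i j hij hj' t ht htm hne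
    · rw [hp_new i hij]
      exact (hs i (by omega)).generic (hxe.le hij hj) t ht htm

end Lift

/-- removing the first column of the Shi tableau of a dominant `m`-Shi region
of type `A_{n-1}` gives the Shi tableau of a region of type `A_{n-2}`, and for
`u ≤ v ≤ n-3` the wall `H_{α_{uv},m}` is separating for the original region iff it is for
the restricted one. -/
theorem restrict_tableau (n m : ℕ) (hn : 3 ≤ n) (hm : 1 ≤ m) (e : ℕ → ℕ → ℤ)
    (he : IsShiTab n m e) :
    IsShiTab (n - 1) m e ∧
    ∀ u v, u ≤ v → v + 2 ≤ n - 1 →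
      (SepWallTab n m e u v ↔ SepWallTab (n - 1) m e u v) := by
  obtain ⟨n, rfl⟩ : ∃ k, n = k + 2 := ⟨n - 2, by omega⟩
  obtain ⟨x, hx, hxe⟩ := he
  refine ⟨⟨_, hx.restrict (by omega) (by omega), hxe.restrict (by omega)⟩,
    fun u v huv hv => ⟨?_, ?_⟩⟩
  · rintro ⟨z, hz, hze, hsep⟩
    exact ⟨_, hz.restrict (by omega) (by omega), hze.restrict (by omega),
      hsep.restrict (by omega) (by omega)⟩
  · rintro ⟨y, hy, hye, hsep⟩
    exact ⟨x, hx, hxe, hsep.lift hm hx hxe hy hye huv hv⟩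

end Shi
end
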